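/- arXiv:2403.07616 — 10 statements merged into one kernel-verified Lean document; each statement's English description precedes it below -/
import Mathlib

section
/- Assume the continuum hypothesis 2^ℵ₀ = ℵ₁ and that K satisfies hypotheses (H). Let M be a K-ℵ₁-saturated L-structure of cardinality ℵ₁. Then every L-structure N of cardinality at most ℵ₁, all of whose substructures of cardinality less than ℵ₁ belong to K, admits an embedding into M. -/
/-!
Fix an injection `rank` of `N` into `ω₁`, so that every element of `N` lies in a countable initial
segment. Partial isomorphisms `N ⇀ M` whose domain is generated by a `rank`-initial segment are
closed under unions of chains, so Zorn's lemma gives a maximal one. Its domain is all of `N`: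
otherwise it is contained in the substructure generated by a countable initial segment, and
`K`-ℵ₁-saturation of `M` extends it to that substructure. The chain starts from the substructures
generated by the constants, which are isomorphic by the last clause of (H)(3).
-/

open FirstOrder FirstOrder.Language CategoryTheory Cardinal Set

namespace FraisseFreeAmalg

variable (L : FirstOrder.Language.{0, 0})

/-- The class is closed under isomorphism. -/
def IsoClosed (K : Set (Bundled.{0} L.Structure)) : Prop :=
  ∀ A ∈ K, ∀ B : Bundled.{0} L.Structure, Nonempty (A ≃[L] B) → B ∈ K

/-- All members of the class are finite or countably infinite. -/
def SmallMembers (K : Set (Bundled.{0} L.Structure)) : Prop :=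
  ∀ A ∈ K, Countable A

/-- Condition (1) of (H): universal axiomatizability. -/
def UnivAx (K : Set (Bundled.{0} L.Structure)) : Prop :=
  ∀ A : Bundled.{0} L.Structure, Countable A → A ∉ K →
    ∃ (n : ℕ) (φ : L.Formula (Fin n)) (a : Fin n → A),
      φ.IsQF ∧ φ.Realize a ∧ ∀ B ∈ K, ∀ b : Fin n → B, ¬ φ.Realize b

/-- Condition (2) of (H): quantifier elimination. -/
def QElim (K : Set (Bundled.{0} L.Structure)) : Prop :=
  ∀ (m n : ℕ) (φ : L.Formula (Fin m ⊕ Fin n)), φ.IsQF →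
    ∀ A ∈ K, ∀ (a : Fin m → A) (b : Fin n → A), φ.Realize (Sum.elim a b) →
      ∃ ψ : L.Formula (Fin m), ψ.IsQF ∧ ψ.Realize a ∧
        ∀ A' ∈ K, ∀ a' : Fin m → A', ψ.Realize a' →
          ∃ B' ∈ K, ∃ (i : A' ↪[L] B') (b' : Fin n → B'),
            φ.Realize (Sum.elim (fun k => i (a' k)) b')

/-- `D` together with `iA, iB` is a free amalgam of `A` and `B` over `C` in the class `K`. -/
def IsFreeAmalgam (K : Set (Bundled.{0} L.Structure))
    (C A B : Bundled.{0} L.Structure) (cA : C ↪[L] A) (cB : C ↪[L] B)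
    (D : Bundled.{0} L.Structure) (iA : A ↪[L] D) (iB : B ↪[L] D) : Prop :=
  (∀ c : C, iA (cA c) = iB (cB c)) ∧
  (Set.range iA ∩ Set.range iB = Set.range fun c : C => iA (cA c)) ∧
  Substructure.closure L (Set.range iA ∪ Set.range iB) = ⊤ ∧
  ∀ D' ∈ K, ∀ (φA : A →[L] D') (φB : B →[L] D'),
    (∀ c : C, φA (cA c) = φB (cB c)) →
    ∃! φ : D →[L] D',
      (∀ a : A, φ (iA a) = φA a) ∧ (∀ b : B, φ (iB b) = φB b)

/-- Condition (3) of (H): free amalgamation (together with agreement on the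
substructures generated by the constants). -/
def FreeAmalg (K : Set (Bundled.{0} L.Structure)) : Prop :=
  (∀ A ∈ K, ∀ B ∈ K,
      Nonempty ((⊥ : L.Substructure A) ≃[L] (⊥ : L.Substructure B))) ∧
  ∀ (C A B : Bundled.{0} L.Structure), C ∈ K → A ∈ K → B ∈ K →
    ∀ (cA : C ↪[L] A) (cB : C ↪[L] B),
      ∃ D ∈ K, ∃ (iA : A ↪[L] D) (iB : B ↪[L] D),
        IsFreeAmalgam L K C A B cA cB D iA iB

/-- Condition (4) of (H): generic element. -/
def GenericElem (K : Set (Bundled.{0} L.Structure)) : Prop :=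
  ∃ X ∈ K, ∃ x : X, Substructure.closure L ({x} : Set X) = ⊤ ∧
    ∀ A ∈ K, ∀ a : A, ∃ φ : X →[L] A, φ x = a

/-- Condition (5) of (H): algebraically independent 3-amalgamation. -/
def ThreeAmalg (K : Set (Bundled.{0} L.Structure)) : Prop :=
  ∀ (E A B : Bundled.{0} L.Structure) (Bb Dd : Fin 2 → Bundled.{0} L.Structure),
    E ∈ K → A ∈ K → B ∈ K → (∀ i, Bb i ∈ K) → (∀ i, Dd i ∈ K) →
    ∀ (eA : E ↪[L] A) (eB : ∀ i, E ↪[L] Bb i)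
      (aD : ∀ i, A ↪[L] Dd i) (bD : ∀ i, Bb i ↪[L] Dd i)
      (bB : ∀ i, Bb i ↪[L] B),
      (∀ i, ∀ e : E, aD i (eA e) = bD i (eB i e)) →
      (∀ e : E, bB 0 (eB 0 e) = bB 1 (eB 1 e)) →
      (∀ i, Set.range (aD i) ∩ Set.range (bD i) =
        Set.range fun e : E => aD i (eA e)) →
      (Set.range (bB 0) ∩ Set.range (bB 1) =
        Set.range fun e : E => bB 0 (eB 0 e)) →
      ∃ D ∈ K, ∃ (dD : ∀ i, Dd i ↪[L] D) (jB : B ↪[L] D),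
        (∀ i, ∀ b : Bb i, dD i (bD i b) = jB (bB i b)) ∧
        (∀ a : A, dD 0 (aD 0 a) = dD 1 (aD 1 a)) ∧
        (∀ i, Set.range (dD i) ∩ Set.range jB =
          Set.range fun b : Bb i => dD i (bD i b)) ∧
        (Set.range (dD 0) ∩ Set.range (dD 1) =
          Set.range fun a : A => dD 0 (aD 0 a))

/-- The hypotheses (H) on the class `K`. -/
structure HypH (K : Set (Bundled.{0} L.Structure)) : Prop where
  small : SmallMembers L K
  isoClosed : IsoClosed L K
  univAx : UnivAx L K
  qElim : QElim L K
  freeAmalg : FreeAmalg L K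
  generic : GenericElem L K
  threeAmalg : ThreeAmalg L K

/-- `M` is `K`-ℵ₁-saturated. -/
def KSat (K : Set (Bundled.{0} L.Structure)) (M : Type) [L.Structure M] : Prop :=
  (∀ S : L.Substructure M, Cardinal.mk S < Cardinal.aleph 1 → (Bundled.of (↥S) : Bundled L.Structure) ∈ K) ∧
  ∀ U ∈ K, ∀ B ∈ K, ∀ (f₀ : U ↪[L] M) (f₁ : U ↪[L] B),
    ∃ g : B ↪[L] M, ∀ u : U, g (f₁ u) = f₀ u

/-- Γ-independence of countable substructures of `M`. -/
def GammaIndep (M : Type) [L.Structure M] (E A B : L.Substructure M) : Prop :=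
  ∀ D' : L.Substructure M, Countable D' →
    ∀ (φA : A →[L] D') (φB : B →[L] D'),
      (∀ (x : M) (hA : x ∈ A) (hB : x ∈ B), x ∈ E → φA ⟨x, hA⟩ = φB ⟨x, hB⟩) →
      ∃! φ : ↥(A ⊔ B) →[L] D',
        (∀ (x : M) (h : x ∈ A), φ ⟨x, (le_sup_left : A ≤ A ⊔ B) h⟩ = φA ⟨x, h⟩) ∧
        (∀ (x : M) (h : x ∈ B), φ ⟨x, (le_sup_right : B ≤ A ⊔ B) h⟩ = φB ⟨x, h⟩)

/-- M-independence: forcing base monotonicity on algebraic independence. -/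
def MIndep (M : Type) [L.Structure M] (E A B : L.Substructure M) : Prop :=
  ∀ C : L.Substructure M, E ≤ C → C ≤ B → (A ⊔ C) ⊓ B = C

end FraisseFreeAmalg

namespace FirstOrder.Language

variable {L : Language} {M N : Type*} [L.Structure M] [L.Structure N]

namespace PartialEquiv

noncomputable def ofEmbedding {S : L.Substructure M} (g : S ↪[L] N) : M ≃ₚ[L] N :=
  ⟨S, g.toHom.range, g.equivRange⟩

theorem le_ofEmbedding {f : M ≃ₚ[L] N} {S : L.Substructure M} (g : S ↪[L] N) (h : f.dom ≤ S)
    (hg : g.comp (Substructure.inclusion h) = f.toEmbedding) : f ≤ ofEmbedding g :=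
  ⟨h, hg⟩

def HasInitialDomain {ι : Type*} [Preorder ι] (rank : M → ι) (f : M ≃ₚ[L] N) : Prop :=
  ∃ I : Set ι, IsLowerSet I ∧ f.dom = Substructure.closure L (rank ⁻¹' I)

variable {ι : Type*} [LinearOrder ι] {rank : M → ι}

theorem HasInitialDomain.of_dom_eq_bot {f : M ≃ₚ[L] N} (hf : f.dom = ⊥) :
    HasInitialDomain rank f :=
  ⟨∅, isLowerSet_empty, by rw [hf, preimage_empty, Substructure.closure_empty]⟩

theorem exists_hasInitialDomain_upperBound {c : Set (M ≃ₚ[L] N)}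
    (hcP : ∀ f ∈ c, HasInitialDomain rank f) (hc : IsChain (· ≤ ·) c) (hne : c.Nonempty) :
    ∃ ub, HasInitialDomain rank ub ∧ ∀ f ∈ c, f ≤ ub := by
  have : Nonempty c := hne.to_subtype
  have : IsDirectedOrder c := hc.directedOn.isDirectedOrder
  let S : c →o M ≃ₚ[L] N := OrderHom.Subtype.val c
  choose I hI hdom using fun f : c => hcP f f.2
  refine ⟨DirectLimit.partialEquivLimit S, ⟨⋃ f, I f, isLowerSet_iUnion hI, ?_⟩,
    fun f hf => DirectLimit.le_partialEquivLimit S ⟨f, hf⟩⟩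
  rw [DirectLimit.dom_partialEquivLimit, preimage_iUnion, Substructure.closure_iUnion]
  exact iSup_congr hdom

variable [Countable (Σ l, L.Functions l)] (hrank : ∀ i, (rank ⁻¹' Iic i).Countable)
  (hext : ∀ f : M ≃ₚ[L] N, ∀ B : L.Substructure M, f.dom ≤ B → Countable B →
    ∃ g, f ≤ g ∧ g.dom = B)
include hrank hext

theorem dom_eq_top_of_maximal {f : M ≃ₚ[L] N} (hf : Maximal (HasInitialDomain rank) f) :
    f.dom = ⊤ := by
  refine eq_top_iff.2 fun x _ => by_contra fun hx => ?_
  obtain ⟨I, hI, hdom⟩ := hf.prop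
  have hIx : I ⊆ Iic (rank x) := fun i hi =>
    (not_le.1 fun hxi => hx (hdom ▸ Substructure.subset_closure (hI hxi hi))).le
  obtain ⟨g, hfg, hg⟩ := hext f (Substructure.closure L (rank ⁻¹' Iic (rank x)))
    (hdom ▸ Substructure.closure_mono (preimage_mono hIx)) ((hrank _).substructure_closure L)
  have hgf : g ≤ f := hf.2 ⟨Iic (rank x), isLowerSet_Iic _, hg⟩ hfg
  exact hx (dom_le_dom hgf (hg ▸ Substructure.subset_closure (mem_preimage.2 le_rfl)))

theorem nonempty_embedding_of_countable_extension {f₀ : M ≃ₚ[L] N} (hf₀ : f₀.dom = ⊥) :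
    Nonempty (M ↪[L] N) := by
  obtain ⟨f, -, hf⟩ := zorn_le_nonempty₀ {f | HasInitialDomain rank f}
    (fun c hcP hc y hy => exists_hasInitialDomain_upperBound hcP hc ⟨y, hy⟩) f₀
    (.of_dom_eq_bot hf₀)
  exact ⟨toEmbeddingOfEqTop (dom_eq_top_of_maximal hrank hext hf)⟩

end PartialEquiv

namespace Substructure

theorem bot_of_bot_eq_top : (⊥ : L.Substructure (⊥ : L.Substructure M)) = ⊤ := by
  refine eq_top_iff.2 fun x _ => ?_
  obtain ⟨y, hy, hyx⟩ : (x : M) ∈ (⊥ : L.Substructure (⊥ : L.Substructure M)).map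
      (⊥ : L.Substructure M).subtype.toHom := by
    rw [Substructure.map_bot]; exact x.2
  exact Subtype.ext hyx ▸ hy

instance countable_bot [Countable (Σ l, L.Functions l)] : Countable (⊥ : L.Substructure M) :=
  closure_empty (L := L) (M := M) ▸ countable_empty.substructure_closure L

end Substructure

end FirstOrder.Language

theorem Cardinal.countable_Iic_ord_aleph_one (i : (aleph 1).ord.ToType) : (Iic i).Countable := by
  rw [← Iio_insert, countable_insert, ← le_aleph0_iff_set_countable, ← lt_aleph_one_iff]
  simpa using mk_Iio_lt i (by simp)

namespace FraisseFreeAmalg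

open FirstOrder.Language.PartialEquiv

variable {L : FirstOrder.Language.{0, 0}} {K : Set (Bundled.{0} L.Structure)}
  {M N : Type} [L.Structure M] [L.Structure N]

theorem KSat.exists_le_dom_eq (hM : KSat L K M)
    (hNage : ∀ S : L.Substructure N, Countable S → (Bundled.of S : Bundled L.Structure) ∈ K)
    (f : N ≃ₚ[L] M) (B : L.Substructure N) (hfB : f.dom ≤ B) (hB : Countable B) :
    ∃ g : N ≃ₚ[L] M, f ≤ g ∧ g.dom = B := by
  have : Countable f.dom := (Substructure.inclusion hfB).injective.countable
  obtain ⟨g, hg⟩ := hM.2 (Bundled.of f.dom) (hNage _ this) (Bundled.of B) (hNage B hB)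
    f.toEmbedding (Substructure.inclusion hfB)
  exact ⟨ofEmbedding g, le_ofEmbedding g hfB (Embedding.ext hg), rfl⟩

theorem FreeAmalg.exists_dom_eq_bot (hK : FreeAmalg L K)
    (hM : (Bundled.of (⊥ : L.Substructure M) : Bundled L.Structure) ∈ K)
    (hN : (Bundled.of (⊥ : L.Substructure N) : Bundled L.Structure) ∈ K) :
    ∃ f : N ≃ₚ[L] M, f.dom = ⊥ := by
  obtain ⟨iso⟩ := hK.1 _ hN _ hM
  let g : (⊥ : L.Substructure N) ↪[L] M :=
    (⊥ : L.Substructure M).subtype.comp <|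
      (⊥ : L.Substructure (⊥ : L.Substructure M)).subtype.comp <| iso.toEmbedding.comp <|
        (Substructure.inclusion Substructure.bot_of_bot_eq_top.ge).comp
          Substructure.topEquiv.symm.toEmbedding
  exact ⟨ofEmbedding g, rfl⟩

theorem statement_1_general (L : FirstOrder.Language.{0, 0}) (hL : Countable L.Symbols)
    (K : Set (Bundled.{0} L.Structure))
    (hK : HypH L K)
    (M : Type) [L.Structure M] (hM : KSat L K M)
    (N : Type) [L.Structure N] (hNcard : Cardinal.mk N ≤ aleph 1)
    (hNage : ∀ S : L.Substructure N, Cardinal.mk S < aleph 1 →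
      (Bundled.of (↥S) : Bundled L.Structure) ∈ K) :
    Nonempty (N ↪[L] M) := by
  have small_of_countable (α : Type) [Countable α] : #α < aleph 1 :=
    mk_le_aleph0.trans_lt aleph0_lt_aleph_one
  obtain ⟨f₀, hf₀⟩ := hK.freeAmalg.exists_dom_eq_bot (hM.1 ⊥ (small_of_countable _))
    (hNage ⊥ (small_of_countable _))
  obtain ⟨rank⟩ : Nonempty (N ↪ (aleph 1).ord.ToType) := by
    rwa [← le_def, mk_ord_toType]
  exact nonempty_embedding_of_countable_extension
    (fun i => (countable_Iic_ord_aleph_one i).preimage rank.injective)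
    (hM.exists_le_dom_eq fun S _ => hNage S (small_of_countable S)) hf₀

/-- Assuming CH and (H), every `L`-structure of cardinality at most ℵ₁
all of whose small substructures lie in `K` embeds into a `K`-ℵ₁-saturated structure
of cardinality ℵ₁. -/
theorem statement_1 (L : FirstOrder.Language.{0, 0}) (hL : Countable L.Symbols)
    (K : Set (Bundled.{0} L.Structure))
    (hCH : (2 : Cardinal.{0}) ^ (aleph0 : Cardinal.{0}) = aleph 1)
    (hK : HypH L K)
    (M : Type) [L.Structure M] (hM : KSat L K M) (hMcard : Cardinal.mk M = aleph 1)
    (N : Type) [L.Structure N] (hNcard : Cardinal.mk N ≤ aleph 1)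
    (hNage : ∀ S : L.Substructure N, Cardinal.mk S < aleph 1 →
      (Bundled.of (↥S) : Bundled L.Structure) ∈ K) :
    Nonempty (N ↪[L] M) :=
  statement_1_general L hL K hK M hM N hNcard hNage

end FraisseFreeAmalg
end

section
/- Assume the continuum hypothesis 2^ℵ₀ = ℵ₁ and that K satisfies hypotheses (H). Then any two K-ℵ₁-saturated L-structures of cardinality ℵ₁ are isomorphic. -/
open FirstOrder FirstOrder.Language CategoryTheory Cardinal Set

namespace FraisseFreeAmalg

variable (L : FirstOrder.Language.{0, 0})

/-!
A back-and-forth argument of length `ω₁`. Countable partial isomorphisms between `M` and `N`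
can be extended, by `K`-`ℵ₁`-saturation of the target, to contain any prescribed point in their
domain, and by symmetry in their range. Countable chains of them have countable unions because
the language is countable. Enumerating `M` and `N` along `ω₁`, whose proper initial segments are
countable, a transfinite recursion therefore yields an increasing chain whose union is an
isomorphism. The recursion starts from the isomorphism between the substructures generated by
the constants, which free amalgamation provides.
-/

theorem exists_monotone_forall_mem_of_bddAbove {P ι : Type*} [Preorder P] [Nonempty P]
    [LinearOrder ι] [WellFoundedLT ι] (hι : ∀ i : ι, (Iio i).Countable)
    (hP : ∀ s : Set P, s.Countable → s.Nonempty → IsChain (· ≤ ·) s → BddAbove s)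
    {D : ι → Set P} (hD : ∀ i p, ∃ q, p ≤ q ∧ q ∈ D i) :
    ∃ S : ι → P, Monotone S ∧ ∀ i, S i ∈ D i := by
  choose next le_next next_mem using hD
  let ub : Set P → P := fun s => Classical.epsilon (· ∈ upperBounds s)
  let S : ι → P := wellFounded_lt.fix fun i S' => next i (ub (range fun j : Iio i => S' j j.2))
  have hS : ∀ i, S i = next i (ub (range fun j : Iio i => S j)) :=
    wellFounded_lt.fix_eq _
  have hmono : ∀ i, ∀ j < i, S j ≤ S i := by
    intro i
    induction i using WellFoundedLT.induction with
    | ind i IH =>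
      have hchain : IsChain (· ≤ ·) (range fun j : Iio i => S j) := by
        rintro _ ⟨j, rfl⟩ _ ⟨k, rfl⟩ -
        rcases lt_or_ge j.1 k.1 with hjk | hkj
        · exact Or.inl (IH k k.2 j hjk)
        · exact Or.inr ((eq_or_lt_of_le hkj).elim (fun h => (congrArg S h).le) (IH j j.2 k))
      intro j hj
      have := (hι i).to_subtype
      have hbdd := hP _ (countable_range _) ⟨_, mem_range_self (⟨j, hj⟩ : Iio i)⟩ hchain
      rw [hS i]
      exact (Classical.epsilon_spec hbdd (mem_range_self (⟨j, hj⟩ : Iio i))).trans (le_next _ _)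
  exact ⟨S, monotone_iff_forall_lt.2 fun j i hji => hmono i j hji, fun i => hS i ▸ next_mem _ _⟩

abbrev CountablePartialEquiv (M N : Type) [L.Structure M] [L.Structure N] :=
  {f : M ≃ₚ[L] N // Countable f.dom}

section PartialEquiv

variable {L} {M N : Type} [L.Structure M] [L.Structure N]

open Substructure

theorem countable_iSup [Countable L.Symbols] {ι : Type*} [Countable ι]
    {S : ι → L.Substructure M} (hS : ∀ i, Countable (S i)) : Countable ↥(⨆ i, S i) := by
  rw [iSup_eq_closure]
  exact (countable_iUnion fun i => countable_coe_iff.1 (hS i)).substructure_closure L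

def CountablePartialEquiv.symm (f : CountablePartialEquiv L M N) :
    CountablePartialEquiv L N M :=
  ⟨f.1.symm, have := f.2; Countable.of_equiv _ f.1.toEquiv.toEquiv⟩

theorem CountablePartialEquiv.bddAbove_of_isChain [Countable L.Symbols]
    {s : Set (CountablePartialEquiv L M N)} (hs : s.Countable) (hne : s.Nonempty)
    (hchain : IsChain (· ≤ ·) s) : BddAbove s := by
  have : Nonempty s := hne.to_subtype
  have : IsDirectedOrder s := hchain.directedOn.isDirectedOrder
  have : Countable s := hs.to_subtype
  let T : s →o M ≃ₚ[L] N := ⟨fun f => f.1.1, fun _ _ h => h⟩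
  exact ⟨⟨DirectLimit.partialEquivLimit T, countable_iSup fun f => f.1.2⟩,
    fun f hf => DirectLimit.le_partialEquivLimit T ⟨f, hf⟩⟩

theorem nonempty_equiv_of_forall_mem_dom_cod {ι : Type*} [Preorder ι] [Nonempty ι]
    [IsDirectedOrder ι] {S : ι → M ≃ₚ[L] N} (hS : Monotone S) (hdom : ∀ m, ∃ i, m ∈ (S i).dom)
    (hcod : ∀ n, ∃ i, n ∈ (S i).cod) : Nonempty (M ≃[L] N) := by
  refine ⟨PartialEquiv.toEquivOfEqTop (f := DirectLimit.partialEquivLimit ⟨S, hS⟩)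
    (eq_top_iff.2 fun m _ => ?_) (eq_top_iff.2 fun n _ => ?_)⟩
  · obtain ⟨i, hi⟩ := hdom m
    exact le_iSup (fun i => (S i).dom) i hi
  · obtain ⟨i, hi⟩ := hcod n
    exact le_iSup (fun i => (S i).cod) i hi

variable {K : Set (Bundled.{0} L.Structure)}

theorem KSat.mem_of_countable (hM : KSat L K M) {S : L.Substructure M} (hS : Countable S) :
    (Bundled.of S : Bundled L.Structure) ∈ K :=
  hM.1 S (Cardinal.mk_le_aleph0.trans_lt Cardinal.aleph0_lt_aleph_one)

theorem KSat.exists_le_mem_dom [Countable L.Symbols] (hM : KSat L K M) (hN : KSat L K N)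
    (f : CountablePartialEquiv L M N) (m : M) :
    ∃ g : CountablePartialEquiv L M N, f ≤ g ∧ m ∈ g.1.dom := by
  set A := f.1.dom ⊔ closure L {m}
  have hA : Countable A :=
    cg_iff_countable.1 ((cg_iff_countable.2 f.2).sup (cg_closure_singleton m))
  obtain ⟨g, hg⟩ := hN.2 _ (hM.mem_of_countable f.2) _ (hM.mem_of_countable hA)
    f.1.toEmbedding (inclusion le_sup_left)
  refine ⟨⟨⟨A, g.toHom.range, g.equivRange⟩, hA⟩, ⟨le_sup_left, ?_⟩,
    (le_sup_right : closure L {m} ≤ A) (subset_closure rfl)⟩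
  ext x
  exact hg x

theorem KSat.exists_le_mem_dom_mem_cod [Countable L.Symbols] (hM : KSat L K M)
    (hN : KSat L K N) (f : CountablePartialEquiv L M N) (m : M) (n : N) :
    ∃ g : CountablePartialEquiv L M N, f ≤ g ∧ m ∈ g.1.dom ∧ n ∈ g.1.cod := by
  obtain ⟨g, hfg, hm⟩ := hM.exists_le_mem_dom hN f m
  obtain ⟨h, hgh, hn⟩ := hN.exists_le_mem_dom hM g.symm n
  have hgh : g.1 ≤ h.1.symm := PartialEquiv.symm_le_iff.1 hgh
  exact ⟨h.symm, hfg.trans hgh, PartialEquiv.dom_le_dom hgh hm, hn⟩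

theorem KSat.nonempty_countablePartialEquiv [Countable L.Symbols] (hK : FreeAmalg L K)
    (hM : KSat L K M) (hN : KSat L K N) : Nonempty (CountablePartialEquiv L M N) := by
  have hbot {X : Type} [L.Structure X] : Countable (⊥ : L.Substructure X) := by
    simpa using countable_empty.substructure_closure (M := X) L
  obtain ⟨e⟩ := hK.1 _ (hM.mem_of_countable hbot) _ (hN.mem_of_countable hbot)
  let eM := (subtype (⊥ : L.Substructure M)).substructureEquivMap ⊥
  let eN := (subtype (⊥ : L.Substructure N)).substructureEquivMap ⊥
  exact ⟨⟨⟨_, _, eN.comp (e.comp eM.symm)⟩, Countable.of_equiv _ eM.toEquiv⟩⟩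

end PartialEquiv

theorem countable_Iio_toType_ord_aleph_one (i : (aleph 1 : Cardinal.{0}).ord.ToType) :
    (Iio i).Countable :=
  le_aleph0_iff_set_countable.1 (lt_aleph_one_iff.1 (by simpa using mk_Iio_lt i))

theorem statement_2_general (L : FirstOrder.Language.{0, 0}) (hL : Countable L.Symbols)
    (K : Set (Bundled.{0} L.Structure))
    (hK : HypH L K)
    (M : Type) [L.Structure M] (hM : KSat L K M) (hMcard : Cardinal.mk M = aleph 1)
    (N : Type) [L.Structure N] (hN : KSat L K N) (hNcard : Cardinal.mk N = aleph 1) :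
    Nonempty (M ≃[L] N) := by
  let ι := (aleph 1 : Cardinal.{0}).ord.ToType
  obtain ⟨eM⟩ : Nonempty (ι ≃ M) := Cardinal.eq.1 (by rw [mk_ord_toType, hMcard])
  obtain ⟨eN⟩ : Nonempty (ι ≃ N) := Cardinal.eq.1 (by rw [mk_ord_toType, hNcard])
  have : Nonempty ι := Ordinal.nonempty_toType_iff.2 (by simpa using (Ordinal.omega_pos 1).ne')
  have := hM.nonempty_countablePartialEquiv hK.freeAmalg hN
  obtain ⟨S, hS, hSmem⟩ := exists_monotone_forall_mem_of_bddAbove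
    countable_Iio_toType_ord_aleph_one (fun _ => CountablePartialEquiv.bddAbove_of_isChain)
    (D := fun i => {f | eM i ∈ f.1.dom ∧ eN i ∈ f.1.cod})
    (fun i f => hM.exists_le_mem_dom_mem_cod hN f (eM i) (eN i))
  exact nonempty_equiv_of_forall_mem_dom_cod (S := fun i => (S i).1) hS
    (fun m => ⟨eM.symm m, by simpa using (hSmem (eM.symm m)).1⟩)
    (fun n => ⟨eN.symm n, by simpa using (hSmem (eN.symm n)).2⟩)

/-- Assuming CH and (H), any two `K`-ℵ₁-saturated `L`-structures of
cardinality ℵ₁ are isomorphic. -/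
theorem statement_2 (L : FirstOrder.Language.{0, 0}) (hL : Countable L.Symbols)
    (K : Set (Bundled.{0} L.Structure))
    (hCH : (2 : Cardinal.{0}) ^ (aleph0 : Cardinal.{0}) = aleph 1)
    (hK : HypH L K)
    (M : Type) [L.Structure M] (hM : KSat L K M) (hMcard : Cardinal.mk M = aleph 1)
    (N : Type) [L.Structure N] (hN : KSat L K N) (hNcard : Cardinal.mk N = aleph 1) :
    Nonempty (M ≃[L] N) :=
  statement_2_general L hL K hK M hM hMcard N hN hNcard

end FraisseFreeAmalg
end

section
/- Suppose K satisfies conditions (1) (universal axiomatizability) and (3) (free amalgamation) of hypotheses (H). Let U be a member of K, let (B_i)_{i<ω} be a countable family of members of K, and for each i let E_i be a substructure of U and f_i : E_i → B_i an embedding. Then there exist a member U' of K containing U as a substructure and embeddings g_i : B_i → U' such that for every i < ω the composite g_i ∘ f_i is the inclusion of E_i into U'. -/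
open FirstOrder FirstOrder.Language CategoryTheory Cardinal Set

namespace FraisseFreeAmalg

variable (L : FirstOrder.Language.{0, 0})

/-! Amalgamate `B n` with the current structure over `E n`, one `n` at a time, to get a chain
`U = G 0 ↪ G 1 ↪ ⋯` in which `B n` embeds into `G (n + 1)` over `E n`; the union of the chain is
the required `U'`. Universal axiomatizability is what keeps everything inside `K`: each `E n`,
being embedded in `U`, is in `K`, and so is the union, since every finite tuple of it already
lives in some `G n` with the same quantifier-free type. -/

section

variable {L} {K : Set (Bundled.{0} L.Structure)}

theorem formula_realize_comp_embedding {α M N : Type} [L.Structure M] [L.Structure N]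
    {φ : L.Formula α} (hφ : φ.IsQF) (g : M ↪[L] N) (v : α → M) :
    φ.Realize (g ∘ v) ↔ φ.Realize v := by
  have h := hφ.realize_embedding g (v := v) (xs := default)
  rwa [Subsingleton.elim (g ∘ (default : Fin 0 → M)) default] at h

theorem UnivAx.mem_of_forall_qfType (h1 : UnivAx L K) {M : Type} [L.Structure M] [Countable M]
    (h : ∀ (n : ℕ) (a : Fin n → M), ∃ A ∈ K, ∃ b : Fin n → A,
      ∀ φ : L.Formula (Fin n), φ.IsQF → φ.Realize a → φ.Realize b) :
    (Bundled.of M : Bundled L.Structure) ∈ K := by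
  by_contra hM
  obtain ⟨n, φ, a, hφ, ha, hK⟩ := h1 (Bundled.of M) ‹_› hM
  obtain ⟨A, hA, b, hb⟩ := h n a
  exact hK A hA b (hb φ hφ ha)

theorem UnivAx.mem_of_embedding (h1 : UnivAx L K) {M : Type} [L.Structure M] [Countable M]
    {A : Bundled.{0} L.Structure} (hA : A ∈ K) (g : M ↪[L] A) :
    (Bundled.of M : Bundled L.Structure) ∈ K :=
  h1.mem_of_forall_qfType fun _ a =>
    ⟨A, hA, g ∘ a, fun _ hφ ha => (formula_realize_comp_embedding hφ g a).2 ha⟩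

theorem UnivAx.directLimit_mem (h1 : UnivAx L K) (hSmall : SmallMembers L K)
    {ι : Type} [Preorder ι] [IsDirectedOrder ι] [Nonempty ι] [Countable ι]
    (G : ι → Bundled.{0} L.Structure) (hG : ∀ i, G i ∈ K)
    (f : ∀ i j, i ≤ j → G i ↪[L] G j)
    [DirectedSystem (fun i => (G i : Type)) fun i j h => f i j h] :
    (Bundled.of (Language.DirectLimit (fun i => (G i : Type)) f) : Bundled L.Structure) ∈ K := by
  have : ∀ i, Countable (G i) := fun i => hSmall _ (hG i)
  have : Countable (Language.DirectLimit (fun i => (G i : Type)) f) :=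
    Function.Surjective.countable
      (f := fun p : Σ i, G i => Language.DirectLimit.of L ι _ f p.1 p.2)
      fun z => (Language.DirectLimit.exists_of z).elim fun i ⟨x, hx⟩ => ⟨⟨i, x⟩, hx⟩
  refine h1.mem_of_forall_qfType fun n a => ?_
  obtain ⟨i, b, rfl⟩ := Language.DirectLimit.exists_quotient_mk'_sigma_mk'_eq _ _ a
  exact ⟨G i, hG i, b, fun φ hφ ha =>
    (formula_realize_comp_embedding hφ (Language.DirectLimit.of L ι _ f i) b).1 ha⟩

theorem UnivAx.exists_limit_of_chain (h1 : UnivAx L K) (hSmall : SmallMembers L K)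
    (G : ℕ → Bundled.{0} L.Structure) (hG : ∀ n, G n ∈ K) (tr : ∀ n, G n ↪[L] G (n + 1)) :
    ∃ U' ∈ K, ∃ inc : ∀ n, G n ↪[L] U', ∀ n x, inc (n + 1) (tr n x) = inc n x := by
  refine ⟨_, h1.directLimit_mem hSmall G hG (DirectedSystem.natLERec tr),
    Language.DirectLimit.of L ℕ _ _, fun n x => ?_⟩
  have hstep : DirectedSystem.natLERec tr n (n + 1) n.le_succ x = tr n x := by
    rw [DirectedSystem.coe_natLERec]
    exact Nat.leRecOn_succ' (C := fun k => (G k : Type)) ..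
  rw [← hstep]
  exact Language.DirectLimit.of_f

theorem FreeAmalg.exists_amalgam_over_substructure (h3 : FreeAmalg L K) (h1 : UnivAx L K)
    (hSmall : SmallMembers L K) {U A C : Bundled.{0} L.Structure} {E : L.Substructure U}
    (hU : U ∈ K) (hA : A ∈ K) (hC : C ∈ K) (j : E ↪[L] A) (f : E ↪[L] C) :
    ∃ D ∈ K, ∃ (iA : A ↪[L] D) (iC : C ↪[L] D), ∀ x, iA (j x) = iC (f x) := by
  have : Countable U := hSmall U hU
  obtain ⟨D, hD, iA, iC, hcomm, -⟩ :=
    h3.2 _ A C (h1.mem_of_embedding hU E.subtype) hA hC j f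
  exact ⟨D, hD, iA, iC, hcomm⟩

theorem exists_chain_amalgamating {U : Bundled.{0} L.Structure} (hU : U ∈ K)
    {B : ℕ → Bundled.{0} L.Structure} {E : ℕ → L.Substructure U} (f : ∀ n, E n ↪[L] B n)
    (amalg : ∀ n, ∀ A ∈ K, ∀ j : E n ↪[L] A,
      ∃ D ∈ K, ∃ (iA : A ↪[L] D) (iB : B n ↪[L] D), ∀ x, iA (j x) = iB (f n x)) :
    ∃ (G : ℕ → Bundled.{0} L.Structure) (_ : ∀ n, G n ∈ K) (tr : ∀ n, G n ↪[L] G (n + 1))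
      (j : ∀ n, U ↪[L] G n) (g : ∀ n, B n ↪[L] G (n + 1)),
      (∀ n u, tr n (j n u) = j (n + 1) u) ∧ ∀ n (e : E n), g n (f n e) = j (n + 1) e := by
  choose D hD iA iB hcomm using amalg
  let stage : ℕ → Σ' (A : Bundled.{0} L.Structure) (_ : A ∈ K), U ↪[L] A := fun n =>
    Nat.rec ⟨U, hU, Embedding.refl L U⟩
      (fun n p =>
        ⟨D n p.1 p.2.1 (p.2.2.comp (E n).subtype), hD .., (iA ..).comp p.2.2⟩) n
  exact ⟨fun n => (stage n).1, fun n => (stage n).2.1, fun n => iA n _ (stage n).2.1 _,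
    fun n => (stage n).2.2, fun n => iB n _ _ _, fun _ _ => rfl, fun n e => (hcomm ..).symm⟩

end

theorem statement_3_general (L : FirstOrder.Language.{0, 0})
    (K : Set (Bundled.{0} L.Structure))
    (hSmall : SmallMembers L K)
    (h1 : UnivAx L K) (h3 : FreeAmalg L K)
    (U : Bundled.{0} L.Structure) (hU : U ∈ K)
    (B : ℕ → Bundled.{0} L.Structure) (hB : ∀ i, B i ∈ K)
    (E : ℕ → L.Substructure U) (f : ∀ i : ℕ, E i ↪[L] B i) :
    ∃ U' ∈ K, ∃ (j : U ↪[L] U') (g : ∀ i : ℕ, B i ↪[L] U'),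
      ∀ (i : ℕ) (e : E i), g i (f i e) = j (e : U) := by
  obtain ⟨G, hG, tr, j, g, htr, hg⟩ := exists_chain_amalgamating hU f fun n A hA j =>
    h3.exists_amalgam_over_substructure h1 hSmall hU hA (hB n) j (f n)
  obtain ⟨U', hU', inc, hinc⟩ := h1.exists_limit_of_chain hSmall G hG tr
  have hinc_j : ∀ n u, inc n (j n u) = inc 0 (j 0 u) := by
    intro n
    induction n with
    | zero => exact fun _ => rfl
    | succ n ih => intro u; rw [← htr, hinc, ih]
  exact ⟨U', hU', (inc 0).comp (j 0), fun i => (inc (i + 1)).comp (g i), fun i e => by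
    simp only [Embedding.comp_apply, hg, hinc_j]⟩

/-- Under conditions (1) and (3) of (H), countably many partial
embeddings into members of `K` can be simultaneously inverted in an extension. -/
theorem statement_3 (L : FirstOrder.Language.{0, 0})
    (K : Set (Bundled.{0} L.Structure))
    (hSmall : SmallMembers L K) (hIso : IsoClosed L K)
    (h1 : UnivAx L K) (h3 : FreeAmalg L K)
    (U : Bundled.{0} L.Structure) (hU : U ∈ K)
    (B : ℕ → Bundled.{0} L.Structure) (hB : ∀ i, B i ∈ K)
    (E : ℕ → L.Substructure U) (f : ∀ i : ℕ, E i ↪[L] B i) :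
    ∃ U' ∈ K, ∃ (j : U ↪[L] U') (g : ∀ i : ℕ, B i ↪[L] U'),
      ∀ (i : ℕ) (e : E i), g i (f i e) = j (e : U) :=
  statement_3_general L K hSmall h1 h3 U hU B hB E f

end FraisseFreeAmalg
end

section
/- Suppose K satisfies hypotheses (H) and let M be a K-ℵ₁-saturated L-structure. Then the complete theory of M has quantifier elimination: for every L-formula φ(x̄) there is a quantifier-free L-formula ψ(x̄) in the same free variables such that M ⊨ ∀x̄ (φ(x̄) ↔ ψ(x̄)), and hence every model of Th(M) satisfies ∀x̄ (φ(x̄) ↔ ψ(x̄)). -/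
open FirstOrder FirstOrder.Language CategoryTheory Cardinal Set

/-! Quantifier elimination reduces to eliminating one existential quantifier in front of a
quantifier-free `χ(x, y)`. If `N ⊨ Th(M)` and `N ⊨ χ(a, b)`, the substructure of `N` generated by
`a, b` lies in `K`: otherwise universal axiomatizability gives a quantifier-free witness of this,
which transfers to `M`, whose countable substructures lie in `K`. Condition (2) of (H) then gives a
quantifier-free `ψ(x)` true of `a` such that every `ψ`-tuple of a member of `K` has a `χ`-witness in
an extension in `K`, and `K`-ℵ₁-saturation pulls such a witness back into `M`. By compactness
finitely many of these `ψ` cover `∃ y, χ` in `M`; completeness of `Th(M)` carries the resulting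
equivalence to all its models. -/

namespace FirstOrder.Language

universe u v w

variable {L : Language.{u, v}} {α β : Type*} {M N : Type*} [L.Structure M] [L.Structure N]

lemma BoundedFormula.isQF_iSup [Finite β] {n : ℕ} {f : β → L.BoundedFormula α n}
    (hf : ∀ b, (f b).IsQF) : (BoundedFormula.iSup f).IsQF := by
  let _ := Fintype.ofFinite β
  suffices ∀ l : List β, (((l.map f).foldr (· ⊔ ·) ⊥ : L.BoundedFormula α n)).IsQF from this _
  intro l
  induction l with
  | nil => exact BoundedFormula.isQF_bot
  | cons b l ih => exact (hf b).sup ih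

lemma Formula.realize_comp_embedding_of_isQF {φ : L.Formula α} (hφ : φ.IsQF) (f : M ↪[L] N)
    (v : α → M) : φ.Realize (f ∘ v) ↔ φ.Realize v := by
  rw [Formula.Realize, Formula.Realize, ← hφ.realize_embedding f (xs := default),
    Subsingleton.elim (f ∘ default) default]

variable (M N) in
lemma exists_realize_iff_of_model_completeTheory [N ⊨ L.completeTheory M] [Finite β]
    (φ : L.Formula β) : (∃ b : β → N, φ.Realize b) ↔ ∃ b : β → M, φ.Realize b := by
  simpa [Sentence.Realize, Formula.realize_iExs, Formula.realize_relabel] using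
    realize_iff_of_model_completeTheory M N ((φ.relabel Sum.inr : L.Formula (Empty ⊕ β)).iExs β)

variable (M N) in
lemma forall_realize_of_model_completeTheory [N ⊨ L.completeTheory M] [Finite β]
    {φ : L.Formula β} (h : ∀ b : β → M, φ.Realize b) (b : β → N) : φ.Realize b := by
  by_contra hb
  obtain ⟨b', hb'⟩ := (exists_realize_iff_of_model_completeTheory M N φ.not).1
    ⟨b, Formula.realize_not.2 hb⟩
  exact Formula.realize_not.1 hb' (h b')

lemma BoundedFormula.IsQF.toFormula {n : ℕ} {φ : L.BoundedFormula α n} (h : φ.IsQF) :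
    φ.toFormula.IsQF := by
  induction h with
  | falsum => exact isQF_bot
  | of_isAtomic h =>
    cases h with
    | equal t u => exact (IsAtomic.equal _ _).isQF
    | rel R ts => exact (IsAtomic.rel _ _).isQF
  | imp _ _ ih₁ ih₂ => exact ih₁.imp ih₂

variable (M) in
theorem exists_isQF_realize_iff_of_forall_model [Nonempty M] {α : Type w} {θ : L.Formula α}
    (h : ∀ (N : Type (max u v w)) [L.Structure N] [N ⊨ L.completeTheory M] (a : α → N),
      θ.Realize a → ∃ ψ : L.Formula α, ψ.IsQF ∧ ψ.Realize a ∧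
        ∀ a' : α → M, ψ.Realize a' → θ.Realize a') :
    ∃ ψ : L.Formula α, ψ.IsQF ∧ ∀ a : α → M, θ.Realize a ↔ ψ.Realize a := by
  classical
  let S := {ψ : L.Formula α // ψ.IsQF ∧ ∀ a' : α → M, ψ.Realize a' → θ.Realize a'}
  let T : Finset S → L[[α]].Theory := fun F =>
    (L.lhomWithConstants α).onTheory (L.completeTheory M) ∪
      insert (Formula.equivSentence θ) ((fun ψ : S => Formula.equivSentence ψ.1.not) '' F)
  have hT : Monotone T := fun F G hFG =>
    union_subset_union_right _ (insert_subset_insert (image_mono (Finset.coe_subset.2 hFG)))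
  obtain ⟨F, hF⟩ : ∃ F, ¬ (T F).IsSatisfiable := by
    by_contra! hsat
    obtain ⟨N⟩ := (Theory.isSatisfiable_directed_union_iff hT.directed_le).2 hsat
    let _ : L.Structure N := (L.lhomWithConstants α).reduct N
    have : (L.lhomWithConstants α).IsExpansionOn N := LHom.isExpansionOn_reduct _ _
    have hN : ∀ F, N ⊨ T F := fun F => N.is_model.mono (subset_iUnion T F)
    have : (N : Type _) ⊨ L.completeTheory M :=
      (LHom.onTheory_model _ _).1 ((Theory.model_union_iff.1 (hN ∅)).1)
    have hθ : θ.Realize fun i => (L.con i : N) :=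
      (Formula.realize_equivSentence N θ).1
        (Theory.realize_sentence_of_mem (T ∅) (Or.inr (mem_insert _ _)))
    obtain ⟨ψ, hψ, hψa, hψθ⟩ := h N _ hθ
    have hnot := Theory.realize_sentence_of_mem (M := N) (T {⟨ψ, hψ, hψθ⟩})
      (Or.inr (Or.inr ⟨⟨ψ, hψ, hψθ⟩, by simp, rfl⟩))
    rw [Formula.realize_equivSentence, Formula.realize_not] at hnot
    exact hnot hψa
  refine ⟨Formula.iSup fun ψ : F => ψ.1.1, BoundedFormula.isQF_iSup fun ψ => ψ.1.2.1,
    fun a => ⟨fun hθ => ?_, fun hψ => ?_⟩⟩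
  · by_contra hnone
    let _ := constantsOn.structure a
    have : M ⊨ T F := by
      refine Theory.model_union_iff.2 ⟨(LHom.onTheory_model _ _).2 inferInstance, ?_⟩
      simp only [Theory.model_iff, mem_insert_iff, mem_image, forall_eq_or_imp]
      refine ⟨(Formula.realize_equivSentence M θ).2 hθ, ?_⟩
      rintro _ ⟨ψ, hψF, rfl⟩
      rw [Formula.realize_equivSentence, Formula.realize_not]
      exact fun hψ => hnone (Formula.realize_iSup.2 ⟨⟨ψ, hψF⟩, hψ⟩)
    exact hF (Theory.Model.isSatisfiable M)
  · obtain ⟨ψ, hψ⟩ := Formula.realize_iSup.1 hψ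
    exact ψ.1.2.2 a hψ

end FirstOrder.Language

namespace FraisseFreeAmalg

open Substructure

variable {L : FirstOrder.Language.{0, 0}} {K : Set (Bundled.{0} L.Structure)}
  {M : Type} [L.Structure M]

lemma countable_closure (hL : Countable L.Symbols) {N : Type} [L.Structure N] {s : Set N}
    (hs : s.Countable) : Countable (closure L s) :=
  have : Countable (Σ l, L.Functions l) := Sum.inl_injective.countable (β := L.Symbols)
  hs.substructure_closure L

lemma KSat.closure_mem (hL : Countable L.Symbols) (hM : KSat L K M) {s : Set M}
    (hs : s.Countable) : (Bundled.of (closure L s) : Bundled L.Structure) ∈ K :=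
  have := countable_closure hL hs
  hM.1 _ (mk_le_aleph0.trans_lt aleph0_lt_aleph_one)

lemma KSat.closure_mem_of_model (hL : Countable L.Symbols) (hU : UnivAx L K) (hM : KSat L K M)
    {N : Type} [L.Structure N] [N ⊨ L.completeTheory M] {s : Set N} (hs : s.Countable) :
    (Bundled.of (closure L s) : Bundled L.Structure) ∈ K := by
  by_contra hS
  obtain ⟨m, χ, a, hχ, hχa, hK⟩ := hU _ (countable_closure hL hs) hS
  obtain ⟨b, hb⟩ := (exists_realize_iff_of_model_completeTheory M N χ).1
    ⟨_, (Formula.realize_comp_embedding_of_isQF hχ (closure L s).subtype a).2 hχa⟩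
  let B := closure L (range b)
  exact hK _ (hM.closure_mem hL (countable_range b))
    (fun i => ⟨b i, subset_closure (mem_range_self i)⟩)
    ((Formula.realize_comp_embedding_of_isQF hχ B.subtype _).1 hb)

lemma QElim.of_finite (hK : QElim L K) {α β : Type} [Finite α] [Finite β]
    {χ : L.Formula (α ⊕ β)} (hχ : χ.IsQF) {A : Bundled L.Structure} (hA : A ∈ K)
    (a : α → A) (b : β → A) (h : χ.Realize (Sum.elim a b)) :
    ∃ ψ : L.Formula α, ψ.IsQF ∧ ψ.Realize a ∧
      ∀ A' ∈ K, ∀ a' : α → A', ψ.Realize a' →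
        ∃ B' ∈ K, ∃ (i : A' ↪[L] B') (b' : β → B'), χ.Realize (Sum.elim (i ∘ a') b') := by
  obtain ⟨m, ⟨eα⟩⟩ := Finite.exists_equiv_fin α
  obtain ⟨n, ⟨eβ⟩⟩ := Finite.exists_equiv_fin β
  obtain ⟨ψ, hψ, hψa, hext⟩ := hK m n (χ.relabel (Sum.map eα eβ)) (hχ.relabel _) A hA
    (a ∘ eα.symm) (b ∘ eβ.symm) (by
      rwa [Formula.realize_relabel, Sum.elim_comp_map, Function.comp_assoc, eα.symm_comp_self,
        Function.comp_assoc, eβ.symm_comp_self, Function.comp_id, Function.comp_id])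
  refine ⟨ψ.relabel eα.symm, hψ.relabel _, by simpa [Formula.realize_relabel] using hψa,
    fun A' hA' a' ha' => ?_⟩
  obtain ⟨B', hB', i, b', hb'⟩ :=
    hext A' hA' (a' ∘ eα.symm) (by simpa [Formula.realize_relabel] using ha')
  exact ⟨B', hB', i, b' ∘ eβ, by
    rw [Formula.realize_relabel, Sum.elim_comp_map] at hb'
    simpa [Function.comp_def] using hb'⟩

lemma KSat.exists_isQF_realize_of_realize (hL : Countable L.Symbols) (hQ : QElim L K)
    (hM : KSat L K M) {α β : Type} [Finite α] [Finite β] {χ : L.Formula (α ⊕ β)} (hχ : χ.IsQF)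
    {N : Type} [L.Structure N] {a : α → N} {b : β → N}
    (hS : (Bundled.of (closure L (range (Sum.elim a b))) : Bundled L.Structure) ∈ K)
    (h : χ.Realize (Sum.elim a b)) :
    ∃ ψ : L.Formula α, ψ.IsQF ∧ ψ.Realize a ∧
      ∀ a' : α → M, ψ.Realize a' → ∃ b' : β → M, χ.Realize (Sum.elim a' b') := by
  let S := closure L (range (Sum.elim a b))
  let c : α ⊕ β → S := fun i => ⟨Sum.elim a b i, subset_closure (mem_range_self i)⟩
  have hc := (Formula.realize_comp_embedding_of_isQF hχ S.subtype c).1 h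
  rw [← Sum.elim_comp_inl_inr c] at hc
  obtain ⟨ψ, hψ, hψa, hext⟩ := hQ.of_finite hχ hS (c ∘ Sum.inl) (c ∘ Sum.inr) hc
  refine ⟨ψ, hψ, (Formula.realize_comp_embedding_of_isQF hψ S.subtype _).2 hψa, fun a' ha' => ?_⟩
  let A := closure L (range a')
  have hA : (Bundled.of A : Bundled L.Structure) ∈ K := hM.closure_mem hL (countable_range a')
  obtain ⟨B, hB, i, b', hb'⟩ := hext _ hA (fun j => ⟨a' j, subset_closure (mem_range_self j)⟩)
    ((Formula.realize_comp_embedding_of_isQF hψ A.subtype _).1 ha')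
  obtain ⟨g, hg⟩ := hM.2 _ hA B hB A.subtype i
  refine ⟨g ∘ b', ?_⟩
  have := (Formula.realize_comp_embedding_of_isQF hχ g _).2 hb'
  rw [Sum.comp_elim] at this
  convert this using 3
  exact funext fun j => (hg ⟨a' j, _⟩).symm

lemma KSat.exists_isQF_realize_iff_exists (hL : Countable L.Symbols) (hU : UnivAx L K)
    (hQ : QElim L K) (hM : KSat L K M) [Nonempty M] {α β : Type} [Finite α] [Finite β]
    {χ : L.Formula (α ⊕ β)} (hχ : χ.IsQF) :
    ∃ ψ : L.Formula α, ψ.IsQF ∧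
      ∀ a : α → M, (∃ b : β → M, χ.Realize (Sum.elim a b)) ↔ ψ.Realize a := by
  simp_rw [← Formula.realize_iExs]
  refine exists_isQF_realize_iff_of_forall_model M fun N _ _ a ha => ?_
  obtain ⟨b, hb⟩ := Formula.realize_iExs.1 ha
  obtain ⟨ψ, hψ, hψa, hψM⟩ := hM.exists_isQF_realize_of_realize hL hQ hχ
    (hM.closure_mem_of_model hL hU (countable_range _)) hb
  exact ⟨ψ, hψ, hψa, fun a' ha' => Formula.realize_iExs.2 (hψM a' ha')⟩

lemma KSat.exists_isQF_realize_iff_boundedFormula (hL : Countable L.Symbols)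
    (hU : UnivAx L K) (hQ : QElim L K) (hM : KSat L K M) {α : Type} [Finite α] {k : ℕ}
    (φ : L.BoundedFormula α k) :
    ∃ ψ : L.Formula (α ⊕ Fin k), ψ.IsQF ∧
      ∀ (v : α → M) (xs : Fin k → M), φ.Realize v xs ↔ ψ.Realize (Sum.elim v xs) := by
  have of_isQF : ∀ {k} {φ : L.BoundedFormula α k}, φ.IsQF → ∃ ψ : L.Formula (α ⊕ Fin k),
      ψ.IsQF ∧ ∀ (v : α → M) (xs : Fin k → M), φ.Realize v xs ↔ ψ.Realize (Sum.elim v xs) :=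
    fun {k φ} h => ⟨φ.toFormula, h.toFormula, fun v xs => by
      rw [BoundedFormula.realize_toFormula, Sum.elim_comp_inl, Sum.elim_comp_inr]⟩
  induction φ with
  | falsum => exact of_isQF BoundedFormula.isQF_bot
  | equal t₁ t₂ => exact of_isQF (BoundedFormula.IsAtomic.equal t₁ t₂).isQF
  | rel R ts => exact of_isQF (BoundedFormula.IsAtomic.rel R ts).isQF
  | imp φ₁ φ₂ ih₁ ih₂ =>
    obtain ⟨ψ₁, h₁, e₁⟩ := ih₁
    obtain ⟨ψ₂, h₂, e₂⟩ := ih₂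
    exact ⟨ψ₁.imp ψ₂, h₁.imp h₂, fun v xs => by
      simp only [BoundedFormula.realize_imp, Formula.realize_imp, e₁, e₂]⟩
  | @all k φ ih =>
    obtain ⟨ψ, hψ, eψ⟩ := ih
    rcases isEmpty_or_nonempty M with _ | _
    · exact ⟨⊤, BoundedFormula.IsQF.top, fun v xs => by simp⟩
    let g : α ⊕ Fin (k + 1) → (α ⊕ Fin k) ⊕ Fin 1 :=
      Sum.elim (Sum.inl ∘ Sum.inl) (Sum.map Sum.inr id ∘ finSumFinEquiv.symm)
    have hg : ∀ (v : α → M) xs (y : Fin 1 → M),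
        Sum.elim (Sum.elim v xs) y ∘ g = Sum.elim v (Fin.snoc xs (y 0)) := by
      intro v xs y
      funext i
      rcases i with i | i
      · rfl
      · refine Fin.lastCases ?_ (fun j => ?_) i <;> simp [g]
    obtain ⟨ρ, hρ, eρ⟩ := hM.exists_isQF_realize_iff_exists hL hU hQ
      (χ := ψ.not.relabel g) (hψ.not.relabel _)
    refine ⟨ρ.not, hρ.not, fun v xs => ?_⟩
    simp only [BoundedFormula.realize_all, Formula.realize_not, ← eρ, Formula.realize_relabel,
      hg, ← eψ, not_exists, not_not]
    exact ⟨fun h y => h (y 0), fun h x => h fun _ => x⟩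

lemma KSat.exists_isQF_realize_iff (hL : Countable L.Symbols) (hU : UnivAx L K)
    (hQ : QElim L K) (hM : KSat L K M) {α : Type} [Finite α] (φ : L.Formula α) :
    ∃ ψ : L.Formula α, ψ.IsQF ∧ ∀ v : α → M, φ.Realize v ↔ ψ.Realize v := by
  obtain ⟨ψ, hψ, e⟩ := hM.exists_isQF_realize_iff_boundedFormula hL hU hQ φ
  refine ⟨ψ.relabel (Sum.elim id finZeroElim), hψ.relabel _, fun v => ?_⟩
  rw [Formula.Realize, e, Formula.realize_relabel, Sum.comp_elim, Function.comp_id,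
    Subsingleton.elim (v ∘ finZeroElim) default]

/-- Under (H), the complete theory of a `K`-ℵ₁-saturated structure
has quantifier elimination. -/
theorem statement_5 (L : FirstOrder.Language.{0, 0}) (hL : Countable L.Symbols)
    (K : Set (Bundled.{0} L.Structure)) (hK : HypH L K)
    (M : Type) [L.Structure M] (hM : KSat L K M)
    (n : ℕ) (φ : L.Formula (Fin n)) :
    ∃ ψ : L.Formula (Fin n), ψ.IsQF ∧
      (∀ a : Fin n → M, φ.Realize a ↔ ψ.Realize a) ∧
      ∀ (N : Type) [L.Structure N], N ⊨ L.completeTheory M →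
        ∀ a : Fin n → N, φ.Realize a ↔ ψ.Realize a := by
  obtain ⟨ψ, hψ, hMψ⟩ := hM.exists_isQF_realize_iff hL hK.univAx hK.qElim φ
  refine ⟨ψ, hψ, hMψ, fun N _ _ a => ?_⟩
  exact Formula.realize_iff.1 <| forall_realize_of_model_completeTheory M N
    (fun a => Formula.realize_iff.2 (hMψ a)) a

end FraisseFreeAmalg
end

section
/- Suppose K satisfies hypotheses (H) and let M be a K-ℵ₁-saturated L-structure. Let A be a countable subset of M and let c be an element of M not belonging to the substructure of M generated by A. Then for every L-formula φ(x, ȳ) and every finite tuple ā from the substructure generated by A such that M ⊨ φ(c, ā), the set {b ∈ M : M ⊨ φ(b, ā)} is infinite. (Hence the algebraic closure and the definable closure of A in M both equal the substructure generated by A.) -/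
/-!
If `φ(x, ā)` had only finitely many solutions `S`, amalgamate `⟨A, S⟩` and `⟨A, c⟩` freely
over `⟨A⟩` and realise the amalgam in `M` over `⟨A, S⟩` by saturation. Saturation also gives a
back-and-forth argument showing that any two embeddings of a countable member of `K` into `M`
realise the same formulas, so the new copy of `c` is again a solution, hence lies in `S`; but
freeness puts it outside `⟨A, S⟩` unless `c ∈ ⟨A⟩`.
-/

open FirstOrder FirstOrder.Language CategoryTheory Cardinal Set

namespace FraisseFreeAmalg

variable (L : FirstOrder.Language.{0, 0})

namespace KSat

variable {L} {K : Set (Bundled.{0} L.Structure)} {M : Type} [L.Structure M]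

theorem mem_of_countable_s6 (hM : KSat L K M) (S : L.Substructure M) [Countable ↥S] :
    (Bundled.of S : Bundled L.Structure) ∈ K :=
  hM.1 S ((Cardinal.mk_le_aleph0_iff.mpr ‹_›).trans_lt Cardinal.aleph0_lt_aleph_one)

theorem exists_embedding_comp_eq (hM : KSat L K M) {U : Type} [L.Structure U]
    (hU : (Bundled.of U : Bundled L.Structure) ∈ K) (S : L.Substructure M) [Countable ↥S]
    (f : U ↪[L] M) (g : U ↪[L] S) : ∃ h : S ↪[L] M, ∀ u, h (g u) = f u :=
  hM.2 (Bundled.of U) hU (Bundled.of S) (hM.mem_of_countable_s6 S) f g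

theorem realize_boundedFormula_comp_iff [Countable L.Symbols] (hM : KSat L K M) {α : Type}
    {n : ℕ} (φ : L.BoundedFormula α n) {U : Type} [L.Structure U] [Countable U]
    (hU : (Bundled.of U : Bundled L.Structure) ∈ K) (f g : U ↪[L] M) (v : α → U)
    (xs : Fin n → U) :
    φ.Realize (f ∘ v) (f ∘ xs) ↔ φ.Realize (g ∘ v) (g ∘ xs) := by
  induction φ generalizing U with
  | falsum => rfl
  | equal t₁ t₂ =>
    simp only [BoundedFormula.Realize, ← Sum.comp_elim, HomClass.realize_term,
      EmbeddingLike.apply_eq_iff_eq]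
  | rel R ts =>
    simp only [BoundedFormula.Realize, ← Sum.comp_elim, HomClass.realize_term]
    exact (StrongHomClass.map_rel f R _).trans (StrongHomClass.map_rel g R _).symm
  | imp φ₁ φ₂ ih₁ ih₂ => exact imp_congr (ih₁ hU f g v xs) (ih₂ hU f g v xs)
  | all φ ih =>
    -- One back-and-forth step: a witness `m` for `g` is matched by a witness for `f`.
    suffices key : ∀ f g : U ↪[L] M, (∀ x, φ.Realize (f ∘ v) (Fin.snoc (f ∘ xs) x)) →
        ∀ m, φ.Realize (g ∘ v) (Fin.snoc (g ∘ xs) m) from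
      ⟨key f g, key g f⟩
    intro f g hf m
    let W : L.Substructure M := Substructure.closure L (range g ∪ {m})
    have : Countable W :=
      ((countable_range g).union (countable_singleton m)).substructure_closure L
    let gW : U ↪[L] W := Embedding.codRestrict W g fun u =>
      Substructure.subset_closure (mem_union_left _ ⟨u, rfl⟩)
    let mW : W := ⟨m, Substructure.subset_closure (mem_union_right _ rfl)⟩
    obtain ⟨h, hh⟩ := hM.exists_embedding_comp_eq hU W f gW
    have hf_eq : (h ∘ gW : U → M) = f := funext hh
    have hg_eq : (W.subtype ∘ gW : U → M) = g := rfl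
    have := ih (hM.mem_of_countable_s6 W) h W.subtype (gW ∘ v) (Fin.snoc (gW ∘ xs) mW)
    rw [Fin.comp_snoc, Fin.comp_snoc, ← Function.comp_assoc, ← Function.comp_assoc,
      ← Function.comp_assoc, ← Function.comp_assoc, hf_eq, hg_eq] at this
    exact this.mp (hf (h mW))

theorem realize_formula_comp_iff [Countable L.Symbols] (hM : KSat L K M) {α : Type}
    (φ : L.Formula α) {U : Type} [L.Structure U] [Countable U]
    (hU : (Bundled.of U : Bundled L.Structure) ∈ K) (f g : U ↪[L] M) (v : α → U) :
    φ.Realize (f ∘ v) ↔ φ.Realize (g ∘ v) := by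
  have := hM.realize_boundedFormula_comp_iff φ hU f g v default
  rwa [Subsingleton.elim (f ∘ default) default, Subsingleton.elim (g ∘ default) default] at this

theorem exists_embedding_free_over (hM : KSat L K M) (hK : FreeAmalg L K)
    {E U V : L.Substructure M} [Countable ↥E] [Countable ↥U] [Countable ↥V]
    (hEU : E ≤ U) (hEV : E ≤ V) :
    ∃ g : U ↪[L] M, (∀ x : E, g (Substructure.inclusion hEU x) = x) ∧
      ∀ u : U, g u ∈ V → (u : M) ∈ E := by
  obtain ⟨D, hD, iV, iU, hcomm, hinter, -, -⟩ :=
    hK.2 (Bundled.of E) (Bundled.of V) (Bundled.of U) (hM.mem_of_countable_s6 E)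
      (hM.mem_of_countable_s6 V) (hM.mem_of_countable_s6 U)
      (Substructure.inclusion hEV) (Substructure.inclusion hEU)
  obtain ⟨g₀, hg₀⟩ := hM.2 (Bundled.of V) (hM.mem_of_countable_s6 V) D hD V.subtype iV
  refine ⟨g₀.comp iU, fun x => ?_, fun u hu => ?_⟩
  · exact (congrArg g₀ (hcomm x)).symm.trans (hg₀ _)
  · have hiU : iU u ∈ range iV ∩ range iU :=
      ⟨⟨⟨_, hu⟩, g₀.injective (hg₀ ⟨_, hu⟩)⟩, u, rfl⟩
    rw [hinter] at hiU
    obtain ⟨e, he⟩ := hiU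
    rw [← iU.injective ((hcomm e).symm.trans he)]
    exact e.2

end KSat

/-- Under (H), in a `K`-ℵ₁-saturated structure every element outside
the substructure generated by a countable set is not algebraic over it (so the
algebraic and definable closures coincide with the generated substructure). -/
theorem statement_6 (L : FirstOrder.Language.{0, 0}) (hL : Countable L.Symbols)
    (K : Set (Bundled.{0} L.Structure)) (hK : HypH L K)
    (M : Type) [L.Structure M] (hM : KSat L K M)
    (A : Set M) (hA : A.Countable)
    (c : M) (hc : c ∉ Substructure.closure L A)
    (n : ℕ) (φ : L.Formula (Unit ⊕ Fin n)) (a : Fin n → M)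
    (ha : ∀ i, a i ∈ Substructure.closure L A)
    (hφ : φ.Realize (Sum.elim (fun _ : Unit => c) a)) :
    {b : M | φ.Realize (Sum.elim (fun _ : Unit => b) a)}.Infinite := by
  intro hfin
  set S := {b : M | φ.Realize (Sum.elim (fun _ : Unit => b) a)}
  let E := Substructure.closure L A
  let U := Substructure.closure L (A ∪ {c})
  let V := Substructure.closure L (A ∪ S)
  have : Countable E := hA.substructure_closure L
  have : Countable U := (hA.union (countable_singleton c)).substructure_closure L
  have : Countable V := (hA.union hfin.countable).substructure_closure L
  have hEU : E ≤ U := Substructure.closure_mono subset_union_left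
  have hEV : E ≤ V := Substructure.closure_mono subset_union_left
  obtain ⟨g, hgE, hgV⟩ := hM.exists_embedding_free_over hK.freeAmalg hEU hEV
  let cU : U := ⟨c, Substructure.subset_closure (mem_union_right _ rfl)⟩
  let v : Unit ⊕ Fin n → U := Sum.elim (fun _ => cU) (fun i => ⟨a i, hEU (ha i)⟩)
  have hgv : g ∘ v = Sum.elim (fun _ => g cU) a := by
    ext (_ | i)
    exacts [rfl, hgE ⟨a i, ha i⟩]
  have hgc : g cU ∈ S := by
    rw [Set.mem_ofPred_eq, ← hgv,
      hM.realize_formula_comp_iff φ (hM.mem_of_countable_s6 U) g U.subtype v]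
    convert hφ using 2
    ext (_ | _) <;> rfl
  exact hc (hgV cU (Substructure.subset_closure (mem_union_right _ hgc)))

end FraisseFreeAmalg
end

section
/- Suppose K satisfies conditions (1)–(4) of hypotheses (H), and suppose that free independence coincides with algebraic independence in K, i.e. for all members E, A, B, D of K with E a substructure of both A and B and A, B substructures of D, the canonical homomorphism A ⊕_E B → D (obtained from the universal property of the free amalgam) is an embedding if and only if A ∩ B = E. Then K satisfies condition (5) (algebraically independent 3-amalgamation) of hypotheses (H). -/
open FirstOrder FirstOrder.Language CategoryTheory Cardinal Set

namespace FraisseFreeAmalg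

variable (L : FirstOrder.Language.{0, 0})

lemma IsFreeAmalgam.symm' {L : FirstOrder.Language.{0, 0}} {K : Set (Bundled.{0} L.Structure)}
    {C A B D : Bundled.{0} L.Structure} {cA : C ↪[L] A} {cB : C ↪[L] B}
    {iA : A ↪[L] D} {iB : B ↪[L] D}
    (h : IsFreeAmalgam L K C A B cA cB D iA iB) :
    IsFreeAmalgam L K C B A cB cA D iB iA := by
  obtain ⟨hagr, hint, hgen, huniv⟩ := h
  refine ⟨fun c => (hagr c).symm, ?_, ?_, ?_⟩
  · rw [Set.inter_comm, hint]
    exact congrArg Set.range (funext hagr)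
  · rw [Set.union_comm]; exact hgen
  · intro T hT φB φA hagr'
    obtain ⟨φ, ⟨h1, h2⟩, huniq⟩ := huniv T hT φA φB (fun c => (hagr' c).symm)
    exact ⟨φ, ⟨h2, h1⟩, fun ψ hp => huniq ψ ⟨hp.2, hp.1⟩⟩

lemma amalg_assoc {L : FirstOrder.Language.{0, 0}} {K : Set (Bundled.{0} L.Structure)}
    {E B0 B1 G X F : Bundled.{0} L.Structure}
    {e0 : E ↪[L] B0} {e1 : E ↪[L] B1} {g0 : B0 ↪[L] G} {g1 : B1 ↪[L] G}
    {b0 : B0 ↪[L] X} {u : X ↪[L] F} {w : G ↪[L] F}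
    (hG : IsFreeAmalgam L K E B0 B1 e0 e1 G g0 g1)
    (hF : IsFreeAmalgam L K B0 X G b0 g0 F u w) :
    IsFreeAmalgam L K E X B1 (b0.comp e0) e1 F u (w.comp g1) := by
  obtain ⟨hGagr, hGint, hGgen, hGuniv⟩ := hG
  obtain ⟨hFagr, hFint, hFgen, hFuniv⟩ := hF
  refine ⟨?_, ?_, ?_, ?_⟩
  · intro e
    show u (b0 (e0 e)) = w (g1 (e1 e))
    rw [hFagr (e0 e), ← hGagr e]
  · apply Set.Subset.antisymm
    · rintro x ⟨⟨d, rfl⟩, b, hb⟩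
      have hx : u d ∈ Set.range ⇑u ∩ Set.range ⇑w := ⟨⟨d, rfl⟩, ⟨g1 b, hb⟩⟩
      rw [hFint] at hx
      obtain ⟨b', hb'⟩ := hx
      have h1 : w (g0 b') = w (g1 b) := by
        rw [← hFagr b']
        exact hb'.trans hb.symm
      have h2 : g0 b' ∈ Set.range ⇑g0 ∩ Set.range ⇑g1 :=
        ⟨⟨b', rfl⟩, ⟨b, (w.injective h1).symm⟩⟩
      rw [hGint] at h2
      obtain ⟨e, he⟩ := h2
      refine ⟨e, ?_⟩
      show u (b0 (e0 e)) = u d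
      rw [g0.injective he]
      exact hb'
    · rintro x ⟨e, rfl⟩
      refine ⟨⟨b0 (e0 e), rfl⟩, ⟨e1 e, ?_⟩⟩
      show w (g1 (e1 e)) = u ((b0.comp e0) e)
      rw [← hGagr e]
      exact (hFagr (e0 e)).symm
  · have hw : Set.range ⇑w ⊆
        (Substructure.closure L (Set.range ⇑u ∪ Set.range ⇑(w.comp g1)) : L.Substructure F) := by
      rintro _ ⟨y, rfl⟩
      have hy : y ∈ Substructure.closure L (Set.range ⇑g0 ∪ Set.range ⇑g1) := by
        rw [hGgen]; trivial
      have hmem : w y ∈ (Substructure.closure L (Set.range ⇑g0 ∪ Set.range ⇑g1)).map w.toHom :=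
        ⟨y, hy, rfl⟩
      rw [Substructure.map_closure] at hmem
      refine Substructure.closure_mono ?_ hmem
      rintro _ ⟨z, hz, rfl⟩
      rcases hz with ⟨b, rfl⟩ | ⟨b, rfl⟩
      · exact Or.inl ⟨b0 b, hFagr b⟩
      · exact Or.inr ⟨b, rfl⟩
    have hle : Substructure.closure L (Set.range ⇑u ∪ Set.range ⇑w) ≤
        Substructure.closure L (Set.range ⇑u ∪ Set.range ⇑(w.comp g1)) := by
      rw [Substructure.closure_le]
      exact Set.union_subset (Set.subset_union_left.trans Substructure.subset_closure) hw
    rw [hFgen] at hle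
    exact top_unique hle
  · intro T hT φX φB1 hagr'
    obtain ⟨χ, ⟨hχ0, hχ1⟩, hχu⟩ := hGuniv T hT (φX.comp b0.toHom) φB1 (fun e => hagr' e)
    obtain ⟨Φ, ⟨hΦu, hΦw⟩, hΦuniq⟩ := hFuniv T hT φX χ (fun b => (hχ0 b).symm)
    refine ⟨Φ, ⟨hΦu, fun b => ?_⟩, ?_⟩
    · show Φ (w (g1 b)) = φB1 b
      rw [hΦw (g1 b)]
      exact hχ1 b
    · rintro Φ' ⟨hu', hv'⟩
      refine hΦuniq Φ' ⟨hu', fun y => ?_⟩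
      have hcomp : Φ'.comp w.toHom = χ := by
        refine hχu _ ⟨fun a => ?_, fun b => hv' b⟩
        show Φ' (w (g0 a)) = φX (b0 a)
        rw [← hFagr a]
        exact hu' (b0 a)
      exact DFunLike.congr_fun hcomp y

lemma key_lemma (L : FirstOrder.Language.{0, 0}) (K : Set (Bundled.{0} L.Structure))
    (h3 : FreeAmalg L K)
    (hfree : ∀ (E A B D : Bundled.{0} L.Structure),
      E ∈ K → A ∈ K → B ∈ K → D ∈ K →
      ∀ (eA : E ↪[L] A) (eB : E ↪[L] B) (jA : A ↪[L] D) (jB : B ↪[L] D),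
        (∀ e : E, jA (eA e) = jB (eB e)) →
        ∀ F : Bundled.{0} L.Structure, F ∈ K →
          ∀ (iA : A ↪[L] F) (iB : B ↪[L] F),
            IsFreeAmalgam L K E A B eA eB F iA iB →
            ∀ φ : F →[L] D,
              (∀ x : A, φ (iA x) = jA x) → (∀ y : B, φ (iB y) = jB y) →
              ((∃ ψ : F ↪[L] D, ∀ z : F, ψ z = φ z) ↔
                Set.range jA ∩ Set.range jB = Set.range fun e : E => jA (eA e)))
    (E A B0 B1 D0 D1 G D' : Bundled.{0} L.Structure)
    (hE : E ∈ K) (hB0 : B0 ∈ K) (hB1 : B1 ∈ K) (hD0 : D0 ∈ K)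
    (hGK : G ∈ K) (hD'K : D' ∈ K)
    (eA : E ↪[L] A) (e0 : E ↪[L] B0) (e1 : E ↪[L] B1)
    (a0 : A ↪[L] D0) (a1 : A ↪[L] D1) (b0 : B0 ↪[L] D0) (b1 : B1 ↪[L] D1)
    (g0 : B0 ↪[L] G) (g1 : B1 ↪[L] G) (k0 : D0 ↪[L] D') (k1 : D1 ↪[L] D')
    (hc0 : ∀ e, a0 (eA e) = b0 (e0 e)) (hc1 : ∀ e, a1 (eA e) = b1 (e1 e))
    (hi1 : Set.range ⇑a1 ∩ Set.range ⇑b1 = Set.range fun e => a1 (eA e))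
    (hG : IsFreeAmalgam L K E B0 B1 e0 e1 G g0 g1)
    (hD' : IsFreeAmalgam L K A D0 D1 a0 a1 D' k0 k1) :
    ∃ ψ : G ↪[L] D',
      (∀ b, ψ (g0 b) = k0 (b0 b)) ∧ (∀ b, ψ (g1 b) = k1 (b1 b)) ∧
      Set.range ⇑k0 ∩ Set.range ⇑ψ = Set.range fun b : B0 => k0 (b0 b) := by
  obtain ⟨F1, hF1K, u, w, hF1⟩ := h3.2 B0 D0 G hB0 hD0 hGK b0 g0
  have hF1' := amalg_assoc hG hF1
  have hagrE : ∀ e : E, k0 ((b0.comp e0) e) = (k1.comp b1) (e1 e) := by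
    intro e
    show k0 (b0 (e0 e)) = k1 (b1 (e1 e))
    rw [← hc0 e, ← hc1 e]
    exact hD'.1 (eA e)
  obtain ⟨Φ, ⟨hΦu, hΦv⟩, -⟩ := hF1'.2.2.2 D' hD'K k0.toHom (k1.comp b1).toHom
    (fun e => hagrE e)
  have hEB1 : Set.range ⇑k0 ∩ Set.range ⇑(k1.comp b1) =
      Set.range fun e : E => k0 ((b0.comp e0) e) := by
    apply Set.Subset.antisymm
    · rintro x ⟨⟨d, rfl⟩, b, hb⟩
      have hx : k0 d ∈ Set.range ⇑k0 ∩ Set.range ⇑k1 := ⟨⟨d, rfl⟩, ⟨b1 b, hb⟩⟩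
      rw [hD'.2.1] at hx
      obtain ⟨a, ha⟩ := hx
      have h1 : a1 a ∈ Set.range ⇑a1 ∩ Set.range ⇑b1 := by
        refine ⟨⟨a, rfl⟩, ⟨b, ?_⟩⟩
        apply k1.injective
        exact hb.trans (ha.symm.trans (hD'.1 a))
      rw [hi1] at h1
      obtain ⟨e, he⟩ := h1
      refine ⟨e, ?_⟩
      show k0 (b0 (e0 e)) = k0 d
      rw [← hc0 e, a1.injective he]
      exact ha
    · rintro x ⟨e, rfl⟩
      refine ⟨⟨b0 (e0 e), rfl⟩, ⟨e1 e, (hagrE e).symm⟩⟩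
  obtain ⟨Ψ, hΨ⟩ := (hfree E D0 B1 D' hE hD0 hB1 hD'K (b0.comp e0) e1 k0 (k1.comp b1)
      hagrE F1 hF1K u (w.comp g1) hF1' Φ hΦu hΦv).mpr hEB1
  have hpsi0 : ∀ b : B0, (Ψ.comp w) (g0 b) = k0 (b0 b) := by
    intro b
    show Ψ (w (g0 b)) = k0 (b0 b)
    rw [← hF1.1 b, hΨ (u (b0 b))]
    exact hΦu (b0 b)
  refine ⟨Ψ.comp w, hpsi0, fun b => ?_, ?_⟩
  · show Ψ (w (g1 b)) = k1 (b1 b)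
    rw [hΨ (w (g1 b))]
    exact hΦv b
  · apply Set.Subset.antisymm
    · rintro x ⟨⟨d, rfl⟩, g, hg⟩
      have h1 : w g = u d := by
        apply Ψ.injective
        rw [hΨ (u d), hΦu d]
        exact hg
      have h2 : u d ∈ Set.range ⇑u ∩ Set.range ⇑w := ⟨⟨d, rfl⟩, ⟨g, h1⟩⟩
      rw [hF1.2.1] at h2
      obtain ⟨b, hb⟩ := h2
      exact ⟨b, congrArg ⇑k0 (u.injective hb)⟩
    · rintro x ⟨b, rfl⟩
      exact ⟨⟨b0 b, rfl⟩, ⟨g0 b, hpsi0 b⟩⟩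

/-- If `K` satisfies conditions (1)-(4) of (H) and free independence
coincides with algebraic independence, then `K` satisfies condition (5). -/
theorem statement_7 (L : FirstOrder.Language.{0, 0})
    (K : Set (Bundled.{0} L.Structure))
    (hSmall : SmallMembers L K) (hIso : IsoClosed L K)
    (h1 : UnivAx L K) (h2 : QElim L K) (h3 : FreeAmalg L K) (h4 : GenericElem L K)
    (hfree : ∀ (E A B D : Bundled.{0} L.Structure),
      E ∈ K → A ∈ K → B ∈ K → D ∈ K →
      ∀ (eA : E ↪[L] A) (eB : E ↪[L] B) (jA : A ↪[L] D) (jB : B ↪[L] D),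
        (∀ e : E, jA (eA e) = jB (eB e)) →
        ∀ F : Bundled.{0} L.Structure, F ∈ K →
          ∀ (iA : A ↪[L] F) (iB : B ↪[L] F),
            IsFreeAmalgam L K E A B eA eB F iA iB →
            ∀ φ : F →[L] D,
              (∀ x : A, φ (iA x) = jA x) → (∀ y : B, φ (iB y) = jB y) →
              ((∃ ψ : F ↪[L] D, ∀ z : F, ψ z = φ z) ↔
                Set.range jA ∩ Set.range jB = Set.range fun e : E => jA (eA e))) :
    ThreeAmalg L K := by
  intro E A B Bb Dd hE hA hB hBb hDd eA eB aD bD bB hcompD hcompB hintD hintB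
  obtain ⟨D', hD'K, k0, k1, hD'⟩ := h3.2 A (Dd 0) (Dd 1) hA (hDd 0) (hDd 1) (aD 0) (aD 1)
  obtain ⟨G, hGK, g0, g1, hG⟩ := h3.2 E (Bb 0) (Bb 1) hE (hBb 0) (hBb 1) (eB 0) (eB 1)
  obtain ⟨ψ0, hψ00, hψ01, hI0⟩ := key_lemma L K h3 hfree E A (Bb 0) (Bb 1) (Dd 0) (Dd 1) G D'
    hE (hBb 0) (hBb 1) (hDd 0) hGK hD'K eA (eB 0) (eB 1) (aD 0) (aD 1) (bD 0) (bD 1)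
    g0 g1 k0 k1 (hcompD 0) (hcompD 1) (hintD 1) hG hD'
  obtain ⟨ψ1, hψ11, hψ10, hI1'⟩ := key_lemma L K h3 hfree E A (Bb 1) (Bb 0) (Dd 1) (Dd 0) G D'
    hE (hBb 1) (hBb 0) (hDd 1) hGK hD'K eA (eB 1) (eB 0) (aD 1) (aD 0) (bD 1) (bD 0)
    g1 g0 k1 k0 (hcompD 1) (hcompD 0) (hintD 0) hG.symm' hD'.symm'
  have hψeq : ⇑ψ0 = ⇑ψ1 := by
    obtain ⟨χ, hχ, hχu⟩ := hG.2.2.2 D' hD'K (k0.toHom.comp (bD 0).toHom)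
      (k1.toHom.comp (bD 1).toHom)
      (fun e => by
        show k0 (bD 0 (eB 0 e)) = k1 (bD 1 (eB 1 e))
        rw [← hcompD 0 e, ← hcompD 1 e]
        exact hD'.1 (eA e))
    have h0 : ψ0.toHom = χ := hχu _ ⟨fun a => hψ00 a, fun b => hψ01 b⟩
    have h1 : ψ1.toHom = χ := hχu _ ⟨fun a => hψ10 a, fun b => hψ11 b⟩
    funext z
    exact DFunLike.congr_fun (h0.trans h1.symm) z
  have hI1 : Set.range ⇑k1 ∩ Set.range ⇑ψ0 = Set.range fun b : Bb 1 => k1 (bD 1 b) := by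
    rw [hψeq]
    exact hI1'
  obtain ⟨χB, ⟨hχB0, hχB1⟩, -⟩ := hG.2.2.2 B hB (bB 0).toHom (bB 1).toHom (fun e => hcompB e)
  obtain ⟨ξ, hξ⟩ := (hfree E (Bb 0) (Bb 1) B hE (hBb 0) (hBb 1) hB (eB 0) (eB 1) (bB 0) (bB 1)
      hcompB G hGK g0 g1 hG χB (fun a => hχB0 a) (fun b => hχB1 b)).mpr hintB
  obtain ⟨D, hDK, p, q, hD⟩ := h3.2 G D' B hGK hD'K hB ψ0 ξ
  have hqb : ∀ i : Fin 2, ∀ b : Bb i,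
      q (bB i b) = p (ψ0 ((match i with | 0 => g0 | 1 => g1 : Bb i ↪[L] G) b)) := by
    intro i
    fin_cases i
    · intro b
      show q (bB 0 b) = p (ψ0 (g0 b))
      calc q (bB 0 b) = q (χB (g0 b)) := congrArg ⇑q (hχB0 b).symm
        _ = q (ξ (g0 b)) := congrArg ⇑q (hξ (g0 b)).symm
        _ = p (ψ0 (g0 b)) := (hD.1 (g0 b)).symm
    · intro b
      show q (bB 1 b) = p (ψ0 (g1 b))
      calc q (bB 1 b) = q (χB (g1 b)) := congrArg ⇑q (hχB1 b).symm
        _ = q (ξ (g1 b)) := congrArg ⇑q (hξ (g1 b)).symm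
        _ = p (ψ0 (g1 b)) := (hD.1 (g1 b)).symm
  refine ⟨D, hDK,
    (fun i => p.comp ((match i with | 0 => k0 | 1 => k1 : Dd i ↪[L] D'))), q,
    ?_, ?_, ?_, ?_⟩
  · intro i
    fin_cases i
    · intro b
      show p (k0 (bD 0 b)) = q (bB 0 b)
      rw [hqb 0 b]
      exact congrArg ⇑p (hψ00 b).symm
    · intro b
      show p (k1 (bD 1 b)) = q (bB 1 b)
      rw [hqb 1 b]
      exact congrArg ⇑p (hψ01 b).symm
  · intro a
    show p (k0 (aD 0 a)) = p (k1 (aD 1 a))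
    exact congrArg ⇑p (hD'.1 a)
  · intro i
    fin_cases i
    · apply Set.Subset.antisymm
      · rintro x ⟨⟨d, rfl⟩, b, hb⟩
        have hx : p (k0 d) ∈ Set.range ⇑p ∩ Set.range ⇑q := ⟨⟨k0 d, rfl⟩, ⟨b, hb⟩⟩
        rw [hD.2.1] at hx
        obtain ⟨g, hg⟩ := hx
        have h2 : k0 d ∈ Set.range ⇑k0 ∩ Set.range ⇑ψ0 := ⟨⟨d, rfl⟩, ⟨g, p.injective hg⟩⟩
        rw [hI0] at h2
        obtain ⟨b', hb'⟩ := h2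
        exact ⟨b', congrArg ⇑p hb'⟩
      · rintro x ⟨b, rfl⟩
        refine ⟨⟨bD 0 b, rfl⟩, ⟨bB 0 b, ?_⟩⟩
        show q (bB 0 b) = p (k0 (bD 0 b))
        rw [hqb 0 b]
        exact congrArg ⇑p (hψ00 b)
    · apply Set.Subset.antisymm
      · rintro x ⟨⟨d, rfl⟩, b, hb⟩
        have hx : p (k1 d) ∈ Set.range ⇑p ∩ Set.range ⇑q := ⟨⟨k1 d, rfl⟩, ⟨b, hb⟩⟩
        rw [hD.2.1] at hx
        obtain ⟨g, hg⟩ := hx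
        have h2 : k1 d ∈ Set.range ⇑k1 ∩ Set.range ⇑ψ0 := ⟨⟨d, rfl⟩, ⟨g, p.injective hg⟩⟩
        rw [hI1] at h2
        obtain ⟨b', hb'⟩ := h2
        exact ⟨b', congrArg ⇑p hb'⟩
      · rintro x ⟨b, rfl⟩
        refine ⟨⟨bD 1 b, rfl⟩, ⟨bB 1 b, ?_⟩⟩
        show q (bB 1 b) = p (k1 (bD 1 b))
        rw [hqb 1 b]
        exact congrArg ⇑p (hψ01 b)
  · apply Set.Subset.antisymm
    · rintro x ⟨⟨d, rfl⟩, d', hd'⟩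
      have h2 : k0 d ∈ Set.range ⇑k0 ∩ Set.range ⇑k1 := ⟨⟨d, rfl⟩, ⟨d', p.injective hd'⟩⟩
      rw [hD'.2.1] at h2
      obtain ⟨a, ha⟩ := h2
      exact ⟨a, congrArg ⇑p ha⟩
    · rintro x ⟨a, rfl⟩
      exact ⟨⟨aD 0 a, rfl⟩, ⟨aD 1 a, congrArg ⇑p (hD'.1 a).symm⟩⟩

end FraisseFreeAmalg
end

section
/- Suppose K satisfies hypotheses (H) and let M be a K-ℵ₁-saturated L-structure. Let E ⊆ A and E ⊆ C ⊆ B be countable substructures of M. If A ⫝^Γ_E B, then A ⫝^Γ_E C (monotonicity), and moreover ⟨A ∪ C⟩ ⫝^Γ_C B (base monotonicity), where ⟨A ∪ C⟩ denotes the substructure of M generated by A ∪ C. -/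
open FirstOrder FirstOrder.Language CategoryTheory Cardinal Set

namespace FraisseFreeAmalg

variable (L : FirstOrder.Language.{0, 0})

section Helpers

variable {L' : FirstOrder.Language.{0, 0}} {M : Type} [L'.Structure M]
  {N : Type} [L'.Structure N]

/-- Every element of `S ⊔ T` lies in the closure of the elements coming from `S` or `T`. -/
lemma mem_closure_sup (S T : L'.Substructure M) (x : ↥(S ⊔ T)) :
    x ∈ Substructure.closure L' {y : ↥(S ⊔ T) | (y : M) ∈ S ∨ (y : M) ∈ T} := by
  set s : Set ↥(S ⊔ T) := {y : ↥(S ⊔ T) | (y : M) ∈ S ∨ (y : M) ∈ T} with hs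
  have hW : S ⊔ T ≤ Substructure.map (S ⊔ T).subtype.toHom (Substructure.closure L' s) := by
    apply sup_le
    · intro z hz
      exact ⟨⟨z, (le_sup_left : S ≤ S ⊔ T) hz⟩, Substructure.subset_closure (Or.inl hz), rfl⟩
    · intro z hz
      exact ⟨⟨z, (le_sup_right : T ≤ S ⊔ T) hz⟩, Substructure.subset_closure (Or.inr hz), rfl⟩
  obtain ⟨y, hy, hval⟩ := hW x.2
  have hyx : y = x := Subtype.ext hval
  rwa [hyx] at hy

/-- Two homomorphisms out of `S ⊔ T` agreeing on `S` and `T` are equal. -/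
lemma hom_ext_sup {S T : L'.Substructure M} {f g : ↥(S ⊔ T) →[L'] N}
    (h1 : ∀ (x : M) (hx : x ∈ S), f ⟨x, (le_sup_left : S ≤ S ⊔ T) hx⟩ = g ⟨x, (le_sup_left : S ≤ S ⊔ T) hx⟩)
    (h2 : ∀ (x : M) (hx : x ∈ T), f ⟨x, (le_sup_right : T ≤ S ⊔ T) hx⟩ = g ⟨x, (le_sup_right : T ≤ S ⊔ T) hx⟩) :
    f = g := by
  ext z
  have key : Set.EqOn f g {y : ↥(S ⊔ T) | (y : M) ∈ S ∨ (y : M) ∈ T} := by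
    rintro y (hy | hy)
    · have hh : (⟨(y : M), (le_sup_left : S ≤ S ⊔ T) hy⟩ : ↥(S ⊔ T)) = y := Subtype.ext rfl
      rw [← hh]; exact h1 _ hy
    · have hh : (⟨(y : M), (le_sup_right : T ≤ S ⊔ T) hy⟩ : ↥(S ⊔ T)) = y := Subtype.ext rfl
      rw [← hh]; exact h2 _ hy
  exact Hom.eqOn_closure key (mem_closure_sup S T z)

/-- If a homomorphism out of `S ⊔ T` maps `S` and `T` into a substructure `U`,
then it maps everything into `U`. -/
lemma hom_mem_sup {S T : L'.Substructure M} (f : ↥(S ⊔ T) →[L'] N) (U : L'.Substructure N)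
    (h1 : ∀ (x : M) (hx : x ∈ S), f ⟨x, (le_sup_left : S ≤ S ⊔ T) hx⟩ ∈ U)
    (h2 : ∀ (x : M) (hx : x ∈ T), f ⟨x, (le_sup_right : T ≤ S ⊔ T) hx⟩ ∈ U)
    (z : ↥(S ⊔ T)) : f z ∈ U := by
  have hle : Substructure.closure L' {y : ↥(S ⊔ T) | (y : M) ∈ S ∨ (y : M) ∈ T} ≤
      Substructure.comap f U := by
    rw [Substructure.closure_le]
    rintro y (hy | hy)
    · have hh : (⟨(y : M), (le_sup_left : S ≤ S ⊔ T) hy⟩ : ↥(S ⊔ T)) = y := Subtype.ext rfl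
      show f y ∈ U
      rw [← hh]; exact h1 _ hy
    · have hh : (⟨(y : M), (le_sup_right : T ≤ S ⊔ T) hy⟩ : ↥(S ⊔ T)) = y := Subtype.ext rfl
      show f y ∈ U
      rw [← hh]; exact h2 _ hy
  exact hle (mem_closure_sup S T z)

end Helpers

/-- Under (H), in a `K`-ℵ₁-saturated structure, Γ-independence
satisfies monotonicity and base monotonicity. -/
theorem statement_8 (L : FirstOrder.Language.{0, 0}) (hL : Countable L.Symbols)
    (K : Set (Bundled.{0} L.Structure)) (hK : HypH L K)
    (M : Type) [L.Structure M] (hM : KSat L K M)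
    (E A C B : L.Substructure M)
    (hEcnt : Countable E) (hAcnt : Countable A)
    (hCcnt : Countable C) (hBcnt : Countable B)
    (hEA : E ≤ A) (hEC : E ≤ C) (hCB : C ≤ B)
    (h : GammaIndep L M E A B) :
    GammaIndep L M E A C ∧ GammaIndep L M C (A ⊔ C) B := by
  have hmemK : ∀ (S : L.Substructure M), Countable S →
      (Bundled.of (↥S) : Bundled L.Structure) ∈ K := by
    intro S hS
    haveI := hS
    exact hM.1 S (lt_of_le_of_lt Cardinal.mk_le_aleph0 Cardinal.aleph0_lt_aleph_one)
  have hEK := hmemK E hEcnt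
  have hAK := hmemK A hAcnt
  have hCK := hmemK C hCcnt
  have hBK := hmemK B hBcnt
  -- the abstract free amalgam of A and C over E
  obtain ⟨P, hPK, jA, jC, hPagree, _hPint, _hPcl, hPUP⟩ :=
    hK.freeAmalg.2 (Bundled.of ↥E) (Bundled.of ↥A) (Bundled.of ↥C) hEK hAK hCK
      (Substructure.inclusion hEA) (Substructure.inclusion hEC)
  -- embed P into M
  obtain ⟨g, _hg⟩ := hM.2 (Bundled.of ↥E) hEK P hPK E.subtype
    (jA.comp (Substructure.inclusion hEA))
  -- the free amalgam of B and P over C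
  obtain ⟨Q, hQK, iB, iP, hQagree, _, _, _⟩ :=
    hK.freeAmalg.2 (Bundled.of ↥C) (Bundled.of ↥B) P hCK hBK hPK
      (Substructure.inclusion hCB) jC
  -- embed Q into M over P
  obtain ⟨h₁, hh₁⟩ := hM.2 P hPK Q hQK g iP
  -- the target substructure D2 of M
  set D2 : L.Substructure M := h₁.toHom.range with hD2def
  haveI hQcnt : Countable ↥Q := hK.small Q hQK
  haveI hD2cnt : Countable ↥D2 := by
    have hsur : Function.Surjective (fun y : ↥Q => (⟨h₁ y, h₁.toHom.mem_range_self y⟩ : ↥D2)) := by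
      rintro ⟨x, hx⟩
      obtain ⟨y, hy⟩ := Hom.mem_range.1 hx
      exact ⟨y, Subtype.ext hy⟩
    exact hsur.countable
  -- the pair of homomorphisms into D2
  let φA2 : ↥A →[L] ↥D2 :=
    Hom.codRestrict D2 (h₁.toHom.comp (iP.toHom.comp jA.toHom))
      (fun a => h₁.toHom.mem_range_self _)
  let φB2 : ↥B →[L] ↥D2 :=
    Hom.codRestrict D2 (h₁.toHom.comp iB.toHom) (fun b => h₁.toHom.mem_range_self _)
  have hagr2 : ∀ (x : M) (hA : x ∈ A) (hB : x ∈ B), x ∈ E → φA2 ⟨x, hA⟩ = φB2 ⟨x, hB⟩ := by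
    intro x hA hB hE
    apply Subtype.ext
    show h₁ (iP (jA ⟨x, hA⟩)) = h₁ (iB ⟨x, hB⟩)
    have s1 : iP (jA ⟨x, hA⟩) = iP (jC ⟨x, hEC hE⟩) := congrArg iP (hPagree ⟨x, hE⟩)
    have s2 : iB ⟨x, hB⟩ = iP (jC ⟨x, hEC hE⟩) := hQagree ⟨x, hEC hE⟩
    exact congrArg h₁ (s1.trans s2.symm)
  obtain ⟨φhat, ⟨hφhatA, hφhatB⟩, _⟩ := h D2 hD2cnt φA2 φB2 hagr2
  -- restrict to A ⊔ C and corestrict into the copy of P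
  have hACAB : A ⊔ C ≤ A ⊔ B := sup_le_sup_left hCB A
  let Ψ2 : ↥(A ⊔ C) →[L] M :=
    D2.subtype.toHom.comp (φhat.comp (Substructure.inclusion hACAB).toHom)
  have hΨ2A : ∀ (x : M) (hx : x ∈ A),
      Ψ2 ⟨x, (le_sup_left : A ≤ A ⊔ C) hx⟩ = g (jA ⟨x, hx⟩) := by
    intro x hx
    show (φhat (Substructure.inclusion hACAB ⟨x, (le_sup_left : A ≤ A ⊔ C) hx⟩) : M) = _
    have e : Substructure.inclusion hACAB ⟨x, (le_sup_left : A ≤ A ⊔ C) hx⟩ =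
        (⟨x, (le_sup_left : A ≤ A ⊔ B) hx⟩ : ↥(A ⊔ B)) := Subtype.ext rfl
    rw [e, hφhatA x hx]
    show h₁ (iP (jA ⟨x, hx⟩)) = g (jA ⟨x, hx⟩)
    exact hh₁ _
  have hΨ2C : ∀ (x : M) (hx : x ∈ C),
      Ψ2 ⟨x, (le_sup_right : C ≤ A ⊔ C) hx⟩ = g (jC ⟨x, hx⟩) := by
    intro x hx
    have hxB : x ∈ B := hCB hx
    show (φhat (Substructure.inclusion hACAB ⟨x, (le_sup_right : C ≤ A ⊔ C) hx⟩) : M) = _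
    have e : Substructure.inclusion hACAB ⟨x, (le_sup_right : C ≤ A ⊔ C) hx⟩ =
        (⟨x, (le_sup_right : B ≤ A ⊔ B) hxB⟩ : ↥(A ⊔ B)) := Subtype.ext rfl
    rw [e, hφhatB x hxB]
    show h₁ (iB ⟨x, hxB⟩) = g (jC ⟨x, hx⟩)
    have s2 : iB ⟨x, hxB⟩ = iP (jC ⟨x, hx⟩) := hQagree ⟨x, hx⟩
    rw [s2]
    exact hh₁ _
  have hmemS : ∀ z : ↥(A ⊔ C), Ψ2 z ∈ g.toHom.range := by
    apply hom_mem_sup Ψ2 g.toHom.range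
    · intro x hx; rw [hΨ2A x hx]; exact g.toHom.mem_range_self _
    · intro x hx; rw [hΨ2C x hx]; exact g.toHom.mem_range_self _
  let Ψ : ↥(A ⊔ C) →[L] ↥P :=
    g.equivRange.symm.toHom.comp (Hom.codRestrict g.toHom.range Ψ2 hmemS)
  have hΨA : ∀ (x : M) (hx : x ∈ A),
      Ψ ⟨x, (le_sup_left : A ≤ A ⊔ C) hx⟩ = jA ⟨x, hx⟩ := by
    intro x hx
    show g.equivRange.symm (Hom.codRestrict g.toHom.range Ψ2 hmemS
      ⟨x, (le_sup_left : A ≤ A ⊔ C) hx⟩) = jA ⟨x, hx⟩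
    have e : Hom.codRestrict g.toHom.range Ψ2 hmemS ⟨x, (le_sup_left : A ≤ A ⊔ C) hx⟩ =
        g.equivRange (jA ⟨x, hx⟩) := by
      apply Subtype.ext
      show Ψ2 ⟨x, (le_sup_left : A ≤ A ⊔ C) hx⟩ = (g.equivRange (jA ⟨x, hx⟩) : M)
      rw [hΨ2A x hx, Embedding.equivRange_apply]
    rw [e]
    exact g.equivRange.symm_apply_apply _
  have hΨC : ∀ (x : M) (hx : x ∈ C),
      Ψ ⟨x, (le_sup_right : C ≤ A ⊔ C) hx⟩ = jC ⟨x, hx⟩ := by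
    intro x hx
    show g.equivRange.symm (Hom.codRestrict g.toHom.range Ψ2 hmemS
      ⟨x, (le_sup_right : C ≤ A ⊔ C) hx⟩) = jC ⟨x, hx⟩
    have e : Hom.codRestrict g.toHom.range Ψ2 hmemS ⟨x, (le_sup_right : C ≤ A ⊔ C) hx⟩ =
        g.equivRange (jC ⟨x, hx⟩) := by
      apply Subtype.ext
      show Ψ2 ⟨x, (le_sup_right : C ≤ A ⊔ C) hx⟩ = (g.equivRange (jC ⟨x, hx⟩) : M)
      rw [hΨ2C x hx, Embedding.equivRange_apply]
    rw [e]
    exact g.equivRange.symm_apply_apply _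
  constructor
  · -- monotonicity
    intro D' hD' φA φC hagr
    haveI := hD'
    have hD'K := hmemK D' hD'
    obtain ⟨χ, ⟨hχA, hχC⟩, _⟩ := hPUP (Bundled.of ↥D') hD'K φA φC (by
      intro e
      exact hagr e.1 (hEA e.2) (hEC e.2) e.2)
    have p1 : ∀ (x : M) (hx : x ∈ A),
        (χ.comp Ψ) ⟨x, (le_sup_left : A ≤ A ⊔ C) hx⟩ = φA ⟨x, hx⟩ := by
      intro x hx
      show χ (Ψ ⟨x, (le_sup_left : A ≤ A ⊔ C) hx⟩) = φA ⟨x, hx⟩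
      rw [hΨA x hx]
      exact hχA ⟨x, hx⟩
    have p2 : ∀ (x : M) (hx : x ∈ C),
        (χ.comp Ψ) ⟨x, (le_sup_right : C ≤ A ⊔ C) hx⟩ = φC ⟨x, hx⟩ := by
      intro x hx
      show χ (Ψ ⟨x, (le_sup_right : C ≤ A ⊔ C) hx⟩) = φC ⟨x, hx⟩
      rw [hΨC x hx]
      exact hχC ⟨x, hx⟩
    refine ⟨χ.comp Ψ, ⟨p1, p2⟩, ?_⟩
    rintro φ' ⟨q1, q2⟩
    exact hom_ext_sup (fun x hx => (q1 x hx).trans (p1 x hx).symm)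
      (fun x hx => (q2 x hx).trans (p2 x hx).symm)
  · -- base monotonicity
    intro D' hD' φ₁ φ₂ hagr
    haveI := hD'
    have hABeq : (A ⊔ C) ⊔ B ≤ A ⊔ B := by
      rw [sup_assoc, sup_eq_right.2 hCB]
    let φA : ↥A →[L] ↥D' :=
      φ₁.comp (Substructure.inclusion (le_sup_left : A ≤ A ⊔ C)).toHom
    have hagr' : ∀ (x : M) (hA : x ∈ A) (hB : x ∈ B), x ∈ E → φA ⟨x, hA⟩ = φ₂ ⟨x, hB⟩ := by
      intro x hA hB hE
      have hxC : x ∈ C := hEC hE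
      show φ₁ (Substructure.inclusion (le_sup_left : A ≤ A ⊔ C) ⟨x, hA⟩) = φ₂ ⟨x, hB⟩
      have e : Substructure.inclusion (le_sup_left : A ≤ A ⊔ C) (⟨x, hA⟩ : ↥A) =
          (⟨x, (le_sup_left : A ≤ A ⊔ C) hA⟩ : ↥(A ⊔ C)) := Subtype.ext rfl
      rw [e]
      exact hagr x ((le_sup_left : A ≤ A ⊔ C) hA) hB hxC
    obtain ⟨φhat2, ⟨r1, r2⟩, _⟩ := h D' hD' φA φ₂ hagr'
    let φ : ↥((A ⊔ C) ⊔ B) →[L] ↥D' := φhat2.comp (Substructure.inclusion hABeq).toHom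
    have key : φhat2.comp (Substructure.inclusion hACAB).toHom = φ₁ := by
      apply hom_ext_sup
      · intro x hx
        show φhat2 (Substructure.inclusion hACAB ⟨x, (le_sup_left : A ≤ A ⊔ C) hx⟩) = _
        have e : Substructure.inclusion hACAB ⟨x, (le_sup_left : A ≤ A ⊔ C) hx⟩ =
            (⟨x, (le_sup_left : A ≤ A ⊔ B) hx⟩ : ↥(A ⊔ B)) := Subtype.ext rfl
        rw [e, r1 x hx]
        rfl
      · intro x hx
        have hxB : x ∈ B := hCB hx
        show φhat2 (Substructure.inclusion hACAB ⟨x, (le_sup_right : C ≤ A ⊔ C) hx⟩) = _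
        have e : Substructure.inclusion hACAB ⟨x, (le_sup_right : C ≤ A ⊔ C) hx⟩ =
            (⟨x, (le_sup_right : B ≤ A ⊔ B) hxB⟩ : ↥(A ⊔ B)) := Subtype.ext rfl
        rw [e, r2 x hxB]
        exact (hagr x ((le_sup_right : C ≤ A ⊔ C) hx) hxB hx).symm
    have key' : ∀ z : ↥(A ⊔ C), φhat2.comp (Substructure.inclusion hACAB).toHom z = φ₁ z := by
      intro z; rw [key]
    have p1 : ∀ (x : M) (hx : x ∈ A ⊔ C),
        φ ⟨x, (le_sup_left : A ⊔ C ≤ (A ⊔ C) ⊔ B) hx⟩ = φ₁ ⟨x, hx⟩ := by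
      intro x hx
      exact key' ⟨x, hx⟩
    have p2 : ∀ (x : M) (hx : x ∈ B),
        φ ⟨x, (le_sup_right : B ≤ (A ⊔ C) ⊔ B) hx⟩ = φ₂ ⟨x, hx⟩ := by
      intro x hx
      show φhat2 (Substructure.inclusion hABeq ⟨x, (le_sup_right : B ≤ (A ⊔ C) ⊔ B) hx⟩) = _
      have e : Substructure.inclusion hABeq ⟨x, (le_sup_right : B ≤ (A ⊔ C) ⊔ B) hx⟩ =
          (⟨x, (le_sup_right : B ≤ A ⊔ B) hx⟩ : ↥(A ⊔ B)) := Subtype.ext rfl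
      rw [e, r2 x hx]
    refine ⟨φ, ⟨p1, p2⟩, ?_⟩
    rintro φ' ⟨q1, q2⟩
    exact hom_ext_sup (fun x hx => (q1 x hx).trans (p1 x hx).symm)
      (fun x hx => (q2 x hx).trans (p2 x hx).symm)

end FraisseFreeAmalg
end

section
/- Suppose K satisfies hypotheses (H) and let M be a K-ℵ₁-saturated L-structure. Let E ⊆ A, E ⊆ C, and C ⊆ B be countable substructures of M. If A ⫝^Γ_E C and ⟨A ∪ C⟩ ⫝^Γ_C B, then A ⫝^Γ_E B (transitivity of ⫝^Γ), where ⟨A ∪ C⟩ denotes the substructure of M generated by A ∪ C. -/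
open FirstOrder FirstOrder.Language CategoryTheory Cardinal Set

namespace FraisseFreeAmalg

variable (L : FirstOrder.Language.{0, 0})

/-- Under (H), in a `K`-ℵ₁-saturated structure, Γ-independence is
transitive. -/
theorem statement_9 (L : FirstOrder.Language.{0, 0}) (hL : Countable L.Symbols)
    (K : Set (Bundled.{0} L.Structure)) (hK : HypH L K)
    (M : Type) [L.Structure M] (hM : KSat L K M)
    (E A C B : L.Substructure M)
    (hEcnt : Countable E) (hAcnt : Countable A)
    (hCcnt : Countable C) (hBcnt : Countable B)
    (hEA : E ≤ A) (hEC : E ≤ C) (hCB : C ≤ B)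
    (h1 : GammaIndep L M E A C) (h2 : GammaIndep L M C (A ⊔ C) B) :
    GammaIndep L M E A B := by
  intro D' hD' φA φB hagree
  -- restrict φB to C
  set φC : C →[L] D' := φB.comp (Substructure.inclusion hCB).toHom with hφC
  have hφCval : ∀ (x : M) (h : x ∈ C), φC ⟨x, h⟩ = φB ⟨x, hCB h⟩ := fun x h => rfl
  obtain ⟨ψ, ⟨hψA, hψC⟩, hψuniq⟩ :=
    h1 D' hD' φA φC (fun x hA hC hE => by
      rw [hφCval]; exact hagree x hA (hCB hC) hE)
  obtain ⟨χ, ⟨hχAC, hχB⟩, hχuniq⟩ :=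
    h2 D' hD' ψ φB (fun x hAC hB hC => by
      have : (⟨x, hAC⟩ : ↥(A ⊔ C)) = ⟨x, (le_sup_right : C ≤ A ⊔ C) hC⟩ := rfl
      rw [this, hψC x hC, hφCval])
  have hEq : (A ⊔ C) ⊔ B = A ⊔ B := by
    rw [sup_assoc, sup_eq_right.2 hCB]
  have hle : A ⊔ B ≤ (A ⊔ C) ⊔ B := le_of_eq hEq.symm
  have hle' : (A ⊔ C) ⊔ B ≤ A ⊔ B := le_of_eq hEq
  have hle2 : A ⊔ C ≤ A ⊔ B := sup_le le_sup_left (le_trans hCB le_sup_right)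
  refine ⟨χ.comp (Substructure.inclusion hle).toHom, ⟨?_, ?_⟩, ?_⟩
  · intro x h
    have h' : x ∈ A ⊔ C := (le_sup_left : A ≤ A ⊔ C) h
    have : χ.comp (Substructure.inclusion hle).toHom
        ⟨x, (le_sup_left : A ≤ A ⊔ B) h⟩
        = χ ⟨x, (le_sup_left : A ⊔ C ≤ (A ⊔ C) ⊔ B) h'⟩ := rfl
    rw [this, hχAC x h', hψA x h]
  · intro x h
    have : χ.comp (Substructure.inclusion hle).toHom
        ⟨x, (le_sup_right : B ≤ A ⊔ B) h⟩
        = χ ⟨x, (le_sup_right : B ≤ (A ⊔ C) ⊔ B) h⟩ := rfl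
    rw [this, hχB x h]
  · intro φ' ⟨h'A, h'B⟩
    have hψ' : φ'.comp (Substructure.inclusion hle2).toHom = ψ := by
      refine hψuniq _ ⟨fun x h => ?_, fun x h => ?_⟩
      · have : φ'.comp (Substructure.inclusion hle2).toHom
            ⟨x, (le_sup_left : A ≤ A ⊔ C) h⟩
            = φ' ⟨x, (le_sup_left : A ≤ A ⊔ B) h⟩ := rfl
        rw [this, h'A x h]
      · have : φ'.comp (Substructure.inclusion hle2).toHom
            ⟨x, (le_sup_right : C ≤ A ⊔ C) h⟩
            = φ' ⟨x, (le_sup_right : B ≤ A ⊔ B) (hCB h)⟩ := rfl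
        rw [this, h'B x (hCB h), hφCval]
    have hχ' : φ'.comp (Substructure.inclusion hle').toHom = χ := by
      refine hχuniq _ ⟨fun x h => ?_, fun x h => ?_⟩
      · have : φ'.comp (Substructure.inclusion hle').toHom
            ⟨x, (le_sup_left : A ⊔ C ≤ (A ⊔ C) ⊔ B) h⟩
            = φ'.comp (Substructure.inclusion hle2).toHom ⟨x, h⟩ := rfl
        rw [this, hψ']
      · have : φ'.comp (Substructure.inclusion hle').toHom
            ⟨x, (le_sup_right : B ≤ (A ⊔ C) ⊔ B) h⟩
            = φ' ⟨x, (le_sup_right : B ≤ A ⊔ B) h⟩ := rfl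
        rw [this, h'B x h]
    ext ⟨x, hx⟩
    have hx' : x ∈ (A ⊔ C) ⊔ B := hle hx
    have hcal : φ' ⟨x, hx⟩ = χ.comp (Substructure.inclusion hle).toHom ⟨x, hx⟩ :=
      calc φ' ⟨x, hx⟩ = φ'.comp (Substructure.inclusion hle').toHom ⟨x, hx'⟩ := rfl
      _ = χ ⟨x, hx'⟩ := by rw [hχ']
        _ = χ.comp (Substructure.inclusion hle).toHom ⟨x, hx⟩ := rfl
    rw [hcal]

end FraisseFreeAmalg
end

section
/- Suppose K satisfies hypotheses (H) and let M be a K-ℵ₁-saturated L-structure. Finite character of ⫝^Γ: let E ⊆ A and E ⊆ B be countable substructures of M such that A ⫝^Γ_E B fails. Then there exist finite tuples ā in A and b̄ in B such that ⟨E ∪ ā⟩ ⫝^Γ_E ⟨E ∪ b̄⟩ fails, where ⟨X⟩ denotes the substructure of M generated by X. -/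
open FirstOrder FirstOrder.Language CategoryTheory Cardinal Set

namespace FraisseFreeAmalg

variable (L : FirstOrder.Language.{0, 0})

open FirstOrder.Language.Structure in
set_option maxHeartbeats 2000000 in
theorem gammaIndep_of_finite (M : Type) [L.Structure M]
    (E A B : L.Substructure M) (hEA : E ≤ A) (hEB : E ≤ B)
    (hfin : ∀ s t : Set M, s.Finite → t.Finite → s ⊆ (A : Set M) → t ⊆ (B : Set M) →
      GammaIndep L M E (E ⊔ Substructure.closure L s) (E ⊔ Substructure.closure L t)) :
    GammaIndep L M E A B := by
  classical
  intro D' hD' φA φB hagree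
  have mem_of_le : ∀ {S T : L.Substructure M} (h : S ≤ T) {x : M}, x ∈ S → x ∈ T :=
    fun {S T} h {x} hx => SetLike.le_def.1 h hx
  have hQA : ∀ {s : Set M}, s ⊆ (A : Set M) → E ⊔ Substructure.closure L s ≤ A := fun hs =>
    sup_le hEA (Substructure.closure_le.2 hs)
  have hQB : ∀ {t : Set M}, t ⊆ (B : Set M) → E ⊔ Substructure.closure L t ≤ B := fun ht =>
    sup_le hEB (Substructure.closure_le.2 ht)
  have Qmono : ∀ {s s' t t' : Set M}, s ⊆ s' → t ⊆ t' →
      (E ⊔ Substructure.closure L s) ⊔ (E ⊔ Substructure.closure L t) ≤ (E ⊔ Substructure.closure L s') ⊔ (E ⊔ Substructure.closure L t') :=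
    fun hs ht => sup_le_sup (sup_le_sup_left (Substructure.closure_mono hs) E)
      (sup_le_sup_left (Substructure.closure_mono ht) E)
  have exu : ∀ s t : Set M, (hsf : s.Finite) → (htf : t.Finite) →
      (hs : s ⊆ (A : Set M)) → (ht : t ⊆ (B : Set M)) →
      ∃! φ : ↥((E ⊔ Substructure.closure L s) ⊔ (E ⊔ Substructure.closure L t)) →[L] D',
        (∀ x (h : x ∈ E ⊔ Substructure.closure L s), φ ⟨x, mem_of_le le_sup_left h⟩ = φA ⟨x, hQA hs h⟩) ∧
        (∀ x (h : x ∈ E ⊔ Substructure.closure L t), φ ⟨x, mem_of_le le_sup_right h⟩ = φB ⟨x, hQB ht h⟩) := by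
    intro s t hsf htf hs ht
    exact hfin s t hsf htf hs ht D' hD'
      (φA.comp (Substructure.inclusion (hQA hs)).toHom)
      (φB.comp (Substructure.inclusion (hQB ht)).toHom)
      (fun x hA' hB' hE => hagree x (hQA hs hA') (hQB ht hB') hE)
  choose F hF using exu
  have coh : ∀ s t s' t' (hsf : s.Finite) (htf : t.Finite) (hs'f : s'.Finite) (ht'f : t'.Finite)
      (hs : s ⊆ (A : Set M)) (ht : t ⊆ (B : Set M)) (hs' : s' ⊆ (A : Set M))
      (ht' : t' ⊆ (B : Set M)) (hss : s ⊆ s') (htt : t ⊆ t') (x : M)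
      (h1 : x ∈ (E ⊔ Substructure.closure L s) ⊔ (E ⊔ Substructure.closure L t))
      (h2 : x ∈ (E ⊔ Substructure.closure L s') ⊔ (E ⊔ Substructure.closure L t')),
      F s t hsf htf hs ht ⟨x, h1⟩ = F s' t' hs'f ht'f hs' ht' ⟨x, h2⟩ := by
    intro s t s' t' hsf htf hs'f ht'f hs ht hs' ht' hss htt x h1 h2
    have hle := Qmono hss htt
    have heq : (F s' t' hs'f ht'f hs' ht').comp (Substructure.inclusion hle).toHom
        = F s t hsf htf hs ht := by
      refine (hF s t hsf htf hs ht).2 _ ⟨?_, ?_⟩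
      · intro y hy
        exact (hF s' t' hs'f ht'f hs' ht').1.1 y (mem_of_le (sup_le_sup_left (Substructure.closure_mono hss) E) hy)
      · intro y hy
        exact (hF s' t' hs'f ht'f hs' ht').1.2 y (mem_of_le (sup_le_sup_left (Substructure.closure_mono htt) E) hy)
    rw [← heq]
    rfl
  have welldef : ∀ s t s' t' (hsf : s.Finite) (htf : t.Finite) (hs'f : s'.Finite)
      (ht'f : t'.Finite) (hs : s ⊆ (A : Set M)) (ht : t ⊆ (B : Set M))
      (hs' : s' ⊆ (A : Set M)) (ht' : t' ⊆ (B : Set M)) (x : M)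
      (h1 : x ∈ (E ⊔ Substructure.closure L s) ⊔ (E ⊔ Substructure.closure L t))
      (h2 : x ∈ (E ⊔ Substructure.closure L s') ⊔ (E ⊔ Substructure.closure L t')),
      F s t hsf htf hs ht ⟨x, h1⟩ = F s' t' hs'f ht'f hs' ht' ⟨x, h2⟩ := by
    intro s t s' t' hsf htf hs'f ht'f hs ht hs' ht' x h1 h2
    rw [coh s t (s ∪ s') (t ∪ t') hsf htf (hsf.union hs'f) (htf.union ht'f) hs ht
        (union_subset hs hs') (union_subset ht ht') subset_union_left subset_union_left x h1
        (mem_of_le (Qmono subset_union_left subset_union_left) h1),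
      coh s' t' (s ∪ s') (t ∪ t') hs'f ht'f (hsf.union hs'f) (htf.union ht'f) hs' ht'
        (union_subset hs hs') (union_subset ht ht') subset_union_right subset_union_right x h2
        (mem_of_le (Qmono subset_union_right subset_union_right) h2)]
  have cover : ∀ x : M, x ∈ A ⊔ B → ∃ s t : Set M,
      (s.Finite ∧ t.Finite ∧ s ⊆ (A : Set M) ∧ t ⊆ (B : Set M)) ∧
      x ∈ (E ⊔ Substructure.closure L s) ⊔ (E ⊔ Substructure.closure L t) := by
    have base : ∀ y ∈ (A : Set M) ∪ (B : Set M), ∃ s t : Set M,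
        (s.Finite ∧ t.Finite ∧ s ⊆ (A : Set M) ∧ t ⊆ (B : Set M)) ∧
        y ∈ (E ⊔ Substructure.closure L s) ⊔ (E ⊔ Substructure.closure L t) := by
      rintro y (hy | hy)
      · exact ⟨{y}, ∅, ⟨finite_singleton y, finite_empty, singleton_subset_iff.2 hy,
          empty_subset _⟩, mem_of_le le_sup_left (mem_of_le le_sup_right
            (Substructure.subset_closure (mem_singleton y)))⟩
      · exact ⟨∅, {y}, ⟨finite_empty, finite_singleton y, empty_subset _,
          singleton_subset_iff.2 hy⟩, mem_of_le le_sup_right (mem_of_le le_sup_right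
            (Substructure.subset_closure (mem_singleton y)))⟩
    have step : ∀ {n : ℕ} (f : L.Functions n), ClosedUnder f
        {x : M | ∃ s t : Set M,
          (s.Finite ∧ t.Finite ∧ s ⊆ (A : Set M) ∧ t ⊆ (B : Set M)) ∧
          x ∈ (E ⊔ Substructure.closure L s) ⊔ (E ⊔ Substructure.closure L t)} := by
      intro n f xs hxs
      choose s t hpr hmem using hxs
      refine ⟨⋃ i, s i, ⋃ i, t i, ⟨Set.finite_iUnion (fun i => (hpr i).1),
        Set.finite_iUnion (fun i => (hpr i).2.1), iUnion_subset fun i => (hpr i).2.2.1,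
        iUnion_subset fun i => (hpr i).2.2.2⟩, ?_⟩
      exact Substructure.fun_mem _ f xs fun i =>
        mem_of_le (Qmono (subset_iUnion s i) (subset_iUnion t i)) (hmem i)
    intro x hx
    have hx' : x ∈ Substructure.closure L ((A : Set M) ∪ (B : Set M)) := by
      rw [Substructure.closure_union, Substructure.closure_eq, Substructure.closure_eq]
      exact hx
    exact Substructure.closure_induction hx' base step
  choose s0 t0 hadm hmem using cover
  let Fx : ∀ x : M, x ∈ A ⊔ B → D' := fun x hx =>
    F (s0 x hx) (t0 x hx) (hadm x hx).1 (hadm x hx).2.1 (hadm x hx).2.2.1 (hadm x hx).2.2.2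
      ⟨x, hmem x hx⟩
  have Fx_eq : ∀ (x : M) (hx : x ∈ A ⊔ B) (s t : Set M) (hsf : s.Finite) (htf : t.Finite)
      (hs : s ⊆ (A : Set M)) (ht : t ⊆ (B : Set M))
      (h : x ∈ (E ⊔ Substructure.closure L s) ⊔ (E ⊔ Substructure.closure L t)),
      Fx x hx = F s t hsf htf hs ht ⟨x, h⟩ := fun x hx s t hsf htf hs ht h =>
    welldef _ _ _ _ _ _ _ _ _ _ _ _ x _ h
  let Φ : ↥(A ⊔ B) →[L] D' :=
  { toFun := fun x => Fx x.1 x.2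
    map_fun' := by
      intro n f xs
      have hsf : (⋃ i, s0 (xs i).1 (xs i).2).Finite :=
        Set.finite_iUnion fun i => (hadm _ _).1
      have htf : (⋃ i, t0 (xs i).1 (xs i).2).Finite :=
        Set.finite_iUnion fun i => (hadm _ _).2.1
      have hs : (⋃ i, s0 (xs i).1 (xs i).2) ⊆ (A : Set M) :=
        iUnion_subset fun i => (hadm _ _).2.2.1
      have ht : (⋃ i, t0 (xs i).1 (xs i).2) ⊆ (B : Set M) :=
        iUnion_subset fun i => (hadm _ _).2.2.2
      have hxi : ∀ i, ((xs i : M)) ∈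
          (E ⊔ Substructure.closure L (⋃ i, s0 (xs i).1 (xs i).2)) ⊔
            (E ⊔ Substructure.closure L (⋃ i, t0 (xs i).1 (xs i).2)) :=
        fun i => mem_of_le (Qmono (subset_iUnion _ i) (subset_iUnion _ i)) (hmem _ _)
      have hy : (funMap f fun i => ((xs i : M))) ∈
          (E ⊔ Substructure.closure L (⋃ i, s0 (xs i).1 (xs i).2)) ⊔
            (E ⊔ Substructure.closure L (⋃ i, t0 (xs i).1 (xs i).2)) :=
        Substructure.fun_mem _ f _ hxi
      calc Fx (funMap f xs : ↥(A ⊔ B)).1 (funMap f xs).2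
          = F _ _ hsf htf hs ht ⟨funMap f fun i => ((xs i : M)), hy⟩ :=
            Fx_eq _ _ _ _ _ _ _ _ hy
        _ = F _ _ hsf htf hs ht (funMap f fun i => ⟨(xs i : M), hxi i⟩) := rfl
        _ = funMap f (fun i => F _ _ hsf htf hs ht ⟨(xs i : M), hxi i⟩) :=
            (F _ _ hsf htf hs ht).map_fun f _
        _ = funMap f (fun i => Fx (xs i).1 (xs i).2) := by
            congr 1
            funext i
            exact (Fx_eq _ _ _ _ _ _ _ _ (hxi i)).symm
    map_rel' := by
      intro n r xs h
      have hxi : ∀ i, ((xs i : M)) ∈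
          (E ⊔ Substructure.closure L (⋃ i, s0 (xs i).1 (xs i).2)) ⊔
            (E ⊔ Substructure.closure L (⋃ i, t0 (xs i).1 (xs i).2)) :=
        fun i => mem_of_le (Qmono (subset_iUnion _ i) (subset_iUnion _ i)) (hmem _ _)
      have hsf : (⋃ i, s0 (xs i).1 (xs i).2).Finite :=
        Set.finite_iUnion fun i => (hadm _ _).1
      have htf : (⋃ i, t0 (xs i).1 (xs i).2).Finite :=
        Set.finite_iUnion fun i => (hadm _ _).2.1
      have hs : (⋃ i, s0 (xs i).1 (xs i).2) ⊆ (A : Set M) :=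
        iUnion_subset fun i => (hadm _ _).2.2.1
      have ht : (⋃ i, t0 (xs i).1 (xs i).2) ⊆ (B : Set M) :=
        iUnion_subset fun i => (hadm _ _).2.2.2
      have h' : RelMap r (fun i => (⟨(xs i : M), hxi i⟩ :
          ↥((E ⊔ Substructure.closure L (⋃ i, s0 (xs i).1 (xs i).2)) ⊔
            (E ⊔ Substructure.closure L (⋃ i, t0 (xs i).1 (xs i).2))))) := h
      have h2 := (F _ _ hsf htf hs ht).map_rel r _ h'
      have heq : ((F _ _ hsf htf hs ht) ∘ fun i => (⟨(xs i : M), hxi i⟩ :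
          ↥((E ⊔ Substructure.closure L (⋃ i, s0 (xs i).1 (xs i).2)) ⊔
            (E ⊔ Substructure.closure L (⋃ i, t0 (xs i).1 (xs i).2)))))
          = fun i => Fx (xs i).1 (xs i).2 :=
        funext fun i => (Fx_eq _ _ _ _ _ _ _ _ (hxi i)).symm
      rw [heq] at h2
      exact h2 }
  refine ⟨Φ, ⟨?_, ?_⟩, ?_⟩
  · intro x hx
    have hx1 : x ∈ E ⊔ Substructure.closure L ({x} : Set M) :=
      mem_of_le le_sup_right (Substructure.subset_closure (mem_singleton x))
    have hadm1 : ({x} : Set M) ⊆ (A : Set M) := singleton_subset_iff.2 hx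
    have h1 := Fx_eq x (mem_of_le le_sup_left hx) {x} ∅ (finite_singleton x) finite_empty
      hadm1 (empty_subset _) (mem_of_le le_sup_left hx1)
    have h2 := (hF {x} ∅ (finite_singleton x) finite_empty hadm1 (empty_subset _)).1.1 x hx1
    exact h1.trans h2
  · intro x hx
    have hx1 : x ∈ E ⊔ Substructure.closure L ({x} : Set M) :=
      mem_of_le le_sup_right (Substructure.subset_closure (mem_singleton x))
    have hadm1 : ({x} : Set M) ⊆ (B : Set M) := singleton_subset_iff.2 hx
    have h1 := Fx_eq x (mem_of_le le_sup_right hx) ∅ {x} finite_empty (finite_singleton x)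
      (empty_subset _) hadm1 (mem_of_le le_sup_right hx1)
    have h2 := (hF ∅ {x} finite_empty (finite_singleton x) (empty_subset _) hadm1).1.2 x hx1
    exact h1.trans h2
  · intro ψ hψ
    refine Hom.ext fun ⟨x, hx⟩ => ?_
    have hle : (E ⊔ Substructure.closure L (s0 x hx)) ⊔
        (E ⊔ Substructure.closure L (t0 x hx)) ≤ A ⊔ B :=
      sup_le (le_trans (hQA (hadm x hx).2.2.1) le_sup_left)
        (le_trans (hQB (hadm x hx).2.2.2) le_sup_right)
    have heq : ψ.comp (Substructure.inclusion hle).toHom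
        = F (s0 x hx) (t0 x hx) (hadm x hx).1 (hadm x hx).2.1 (hadm x hx).2.2.1
            (hadm x hx).2.2.2 := by
      refine (hF (s0 x hx) (t0 x hx) (hadm x hx).1 (hadm x hx).2.1 (hadm x hx).2.2.1
        (hadm x hx).2.2.2).2 _ ⟨?_, ?_⟩
      · intro y hy
        exact hψ.1 y (mem_of_le (hQA (hadm x hx).2.2.1) hy)
      · intro y hy
        exact hψ.2 y (mem_of_le (hQB (hadm x hx).2.2.2) hy)
    have h3 : ψ ⟨x, hx⟩ = (ψ.comp (Substructure.inclusion hle).toHom) ⟨x, hmem x hx⟩ := rfl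
    have h4 := congrFun (congrArg (fun (g : _ →[L] _) => ⇑g) heq) ⟨x, hmem x hx⟩
    exact h3.trans h4


/-- Under (H), in a `K`-ℵ₁-saturated structure, Γ-independence has
finite character. -/
theorem statement_13 (L : FirstOrder.Language.{0, 0}) (hL : Countable L.Symbols)
    (K : Set (Bundled.{0} L.Structure)) (hK : HypH L K)
    (M : Type) [L.Structure M] (hM : KSat L K M)
    (E A B : L.Substructure M)
    (hEcnt : Countable E) (hAcnt : Countable A) (hBcnt : Countable B)
    (hEA : E ≤ A) (hEB : E ≤ B)
    (h : ¬ GammaIndep L M E A B) :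
    ∃ (m n : ℕ) (a : Fin m → M) (b : Fin n → M),
      (∀ i, a i ∈ A) ∧ (∀ i, b i ∈ B) ∧
      ¬ GammaIndep L M E (E ⊔ Substructure.closure L (Set.range a))
          (E ⊔ Substructure.closure L (Set.range b)) := by
  by_contra hcon
  push_neg at hcon
  refine h (gammaIndep_of_finite L M E A B hEA hEB fun s t hsf htf hs ht => ?_)
  obtain ⟨m, fa, hfa⟩ := hsf.fin_embedding
  obtain ⟨n, fb, hfb⟩ := htf.fin_embedding
  have := hcon m n (⇑fa) (⇑fb) (fun i => hs (hfa ▸ Set.mem_range_self i))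
    (fun i => ht (hfb ▸ Set.mem_range_self i))
  rwa [hfa, hfb] at this

end FraisseFreeAmalg
end

section
/- Suppose K satisfies hypotheses (H) and let M be a K-ℵ₁-saturated L-structure. Local character of algebraic independence: let ā be a finite tuple from M, let (A_i)_{i<ω₁} be an increasing continuous chain of countable substructures of M (continuous meaning A_λ = ⋃_{i<λ} A_i for every limit ordinal λ < ω₁), and let A_{ω₁} = ⋃_{i<ω₁} A_i. Then there is an ordinal α < ω₁ such that ⟨A_α ∪ ā⟩ ∩ A_{ω₁} = A_α, where ⟨A_α ∪ ā⟩ denotes the substructure of M generated by A_α together with the entries of ā. -/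
/-! Every countable subset of `A_{ω₁}` already lies in some `A_γ` with `γ < ω₁`, because `ω₁`
has uncountable cofinality. As `L` is countable, so is `⟨A_β ∪ ā⟩`, and each `β < ω₁` therefore
has a `γ < ω₁` with `⟨A_β ∪ ā⟩ ∩ A_{ω₁} ⊆ A_γ`. Iterating `β ↦ γ` ω times from `0` gives a limit
`α < ω₁`; by continuity `⟨A_α ∪ ā⟩` is the directed union of the `⟨A_β ∪ ā⟩` with `β < α`, so
`⟨A_α ∪ ā⟩ ∩ A_{ω₁} ⊆ A_α`. -/

open FirstOrder FirstOrder.Language CategoryTheory Cardinal Set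

open Order

namespace Ordinal

theorem isSuccLimit_nfp {f : Ordinal → Ordinal} {a : Ordinal}
    (hf : ∀ n, f^[n] a < f (f^[n] a)) : IsSuccLimit (nfp f a) := by
  refine (Order.isSuccLimit_iff _).2
    ⟨not_isMin_of_lt ((hf 0).trans_le (iterate_le_nfp f a 1)), ?_⟩
  refine isSuccPrelimit_of_succ_lt fun b hb => ?_
  obtain ⟨n, hn⟩ := lt_nfp_iff.1 hb
  calc succ b ≤ f^[n] a := succ_le_of_lt hn
    _ < f (f^[n] a) := hf n
    _ = f^[n + 1] a := (Function.iterate_succ_apply' f n a).symm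
    _ ≤ nfp f a := iterate_le_nfp f a (n + 1)

theorem exists_isSuccLimit_forall_lt {c : Ordinal} (hc : ℵ₀ < c.cof)
    {P : Ordinal → Ordinal → Prop} (hP : ∀ β < c, ∃ γ, β < γ ∧ γ < c ∧ P β γ)
    (hPmono : ∀ β β' γ γ', β ≤ β' → β' < c → γ ≤ γ' → γ' < c → P β' γ → P β γ') :
    ∃ α < c, IsSuccLimit α ∧ ∀ β < α, P β α := by
  choose! g hg using hP
  have hc0 : 0 < c := pos_iff_ne_zero.2 fun h => by simp [h] at hc
  have hα : nfp g 0 < c := nfp_lt_ord hc (fun β hβ => (hg β hβ).2.1) hc0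
  have hiter (n : ℕ) : g^[n] 0 < c := (iterate_le_nfp g 0 n).trans_lt hα
  refine ⟨nfp g 0, hα, isSuccLimit_nfp fun n => (hg _ (hiter n)).1, fun β hβ => ?_⟩
  obtain ⟨n, hn⟩ := lt_nfp_iff.1 hβ
  have hstep : g (g^[n] 0) ≤ nfp g 0 := by
    rw [← Function.iterate_succ_apply' g n 0]
    exact iterate_le_nfp g 0 (n + 1)
  exact hPmono _ _ _ _ hn.le (hiter n) hstep hα (hg _ (hiter n)).2.2

end Ordinal

namespace FraisseFreeAmalg

section

variable {L : FirstOrder.Language.{0, 0}} {M : Type} [L.Structure M]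

theorem sup_inf_le_of_directed {ι : Type*} [Nonempty ι] {B : ι → L.Substructure M}
    (hB : Directed (· ≤ ·) B) {R T C : L.Substructure M}
    (h : ∀ i, (B i ⊔ R) ⊓ T ≤ C) : ((⨆ i, B i) ⊔ R) ⊓ T ≤ C := by
  intro x ⟨hxR, hxT⟩
  have hBR : Directed (· ≤ ·) fun i => B i ⊔ R :=
    hB.mono_comp (· ≤ ·) fun _ _ hle => sup_le_sup_right hle R
  rw [SetLike.mem_coe, iSup_sup, Substructure.mem_iSup_of_directed hBR] at hxR
  obtain ⟨i, hi⟩ := hxR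
  exact h i ⟨hi, hxT⟩

theorem directed_of_monotoneOn_Iio {A : Ordinal.{0} → L.Substructure M} {c β : Ordinal.{0}}
    (hA : MonotoneOn A (Iio c)) (hβ : β ≤ c) :
    Directed (· ≤ ·) fun i : {i : Ordinal.{0} // i < β} => A i := by
  rintro ⟨i, hi⟩ ⟨j, hj⟩
  have hij : max i j ∈ Iio c := (max_lt hi hj).trans_le hβ
  exact ⟨⟨max i j, max_lt hi hj⟩, hA (hi.trans_le hβ) hij (le_max_left i j),
    hA (hj.trans_le hβ) hij (le_max_right i j)⟩

theorem aleph0_lt_cof_ord_aleph_one : ℵ₀ < (aleph 1).ord.cof := by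
  rw [isRegular_aleph_one.cof_ord]
  exact aleph0_lt_aleph_one

theorem countable_sup [Countable (Σ l, L.Functions l)] {B R : L.Substructure M}
    (hB : Countable B) (hR : Countable R) : Countable ↥(B ⊔ R) := by
  rw [← Substructure.closure_eq B, ← Substructure.closure_eq R, ← Substructure.closure_union]
  exact ((countable_coe_iff.1 hB).union (countable_coe_iff.1 hR)).substructure_closure L

variable {A : Ordinal.{0} → L.Substructure M}

theorem exists_subset_of_countable_subset_iSup (hA : MonotoneOn A (Iio (aleph 1).ord))
    {X : Set M} (hX : X.Countable)
    (hXA : X ⊆ (⨆ i : {i : Ordinal.{0} // i < (aleph 1).ord}, A i : L.Substructure M))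
    {β : Ordinal.{0}} (hβ : β < (aleph 1).ord) :
    ∃ γ, β < γ ∧ γ < (aleph 1).ord ∧ X ⊆ A γ := by
  have hdir := directed_of_monotoneOn_Iio hA le_rfl
  have : Nonempty {i : Ordinal.{0} // i < (aleph 1).ord} := ⟨⟨β, hβ⟩⟩
  have hmem (x : X) : ∃ i : {i : Ordinal.{0} // i < (aleph 1).ord}, (x : M) ∈ A i :=
    (Substructure.mem_iSup_of_directed hdir).1 (hXA x.2)
  choose idx hidx using hmem
  have hcard : #X < (aleph 1).ord.cof :=
    (mk_le_aleph0_iff.2 hX.to_subtype).trans_lt aleph0_lt_cof_ord_aleph_one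
  have hsup : ⨆ x, (idx x : Ordinal.{0}) < (aleph 1).ord :=
    Ordinal.iSup_lt_of_lt_cof hcard fun x => (idx x).2
  have hsucc : succ β < (aleph 1).ord := (isSuccLimit_ord (aleph0_le_aleph 1)).succ_lt hβ
  refine ⟨max (succ β) (⨆ x, (idx x : Ordinal.{0})), (lt_succ β).trans_le (le_max_left _ _),
    max_lt hsucc hsup, fun x hx => ?_⟩
  have hle : (idx ⟨x, hx⟩ : Ordinal.{0}) ≤ max (succ β) (⨆ x, (idx x : Ordinal.{0})) :=
    (Ordinal.le_iSup (fun x => (idx x : Ordinal.{0})) ⟨x, hx⟩).trans (le_max_right _ _)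
  exact hA (idx ⟨x, hx⟩).2 (max_lt hsucc hsup) hle (hidx ⟨x, hx⟩)

theorem exists_sup_inf_iSup_le [Countable (Σ l, L.Functions l)]
    (hA : MonotoneOn A (Iio (aleph 1).ord))
    (hcnt : ∀ i < (aleph 1).ord, Countable (A i)) {R : L.Substructure M} (hR : Countable R)
    {β : Ordinal.{0}} (hβ : β < (aleph 1).ord) :
    ∃ γ, β < γ ∧ γ < (aleph 1).ord ∧
      (A β ⊔ R) ⊓ (⨆ i : {i : Ordinal.{0} // i < (aleph 1).ord}, A i) ≤ A γ := by
  have hAR : ((A β ⊔ R : L.Substructure M) : Set M).Countable :=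
    countable_coe_iff.1 (countable_sup (hcnt β hβ) hR)
  exact exists_subset_of_countable_subset_iSup hA (hAR.mono inter_subset_left)
    inter_subset_right hβ

end

theorem statement_16_general (L : FirstOrder.Language.{0, 0}) (hL : Countable L.Symbols)
    (M : Type) [L.Structure M]
    (n : ℕ) (a : Fin n → M)
    (A : Ordinal.{0} → L.Substructure M)
    (hmono : ∀ i j : Ordinal.{0}, i ≤ j → j < (aleph 1).ord → A i ≤ A j)
    (hcnt : ∀ i : Ordinal.{0}, i < (aleph 1).ord → Countable (A i))
    (hcont : ∀ l : Ordinal.{0}, l < (aleph 1).ord → Order.IsSuccLimit l →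
      A l = ⨆ i : {i : Ordinal.{0} // i < l}, A i) :
    ∃ α < (aleph 1).ord,
      (A α ⊔ Substructure.closure L (Set.range a)) ⊓
          (⨆ i : {i : Ordinal.{0} // i < (aleph 1).ord}, A i) = A α := by
  have hA : MonotoneOn A (Iio (aleph 1).ord) := fun i _ j hj hij => hmono i j hij hj
  have hR : Countable (Substructure.closure L (range a)) :=
    (finite_range a).countable.substructure_closure L
  obtain ⟨α, hα, hlim, hclosed⟩ := Ordinal.exists_isSuccLimit_forall_lt
    aleph0_lt_cof_ord_aleph_one (fun _ hβ => exists_sup_inf_iSup_le hA hcnt hR hβ)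
    fun β β' γ γ' hββ' hβ' hγγ' hγ' h =>
      (inf_le_inf_right _ (sup_le_sup_right (hmono β β' hββ' hβ') _)).trans
        (h.trans (hmono γ γ' hγγ' hγ'))
  have : Nonempty {i : Ordinal.{0} // i < α} := ⟨⟨0, hlim.bot_lt⟩⟩
  have hle := sup_inf_le_of_directed (directed_of_monotoneOn_Iio hA hα.le)
    fun i => hclosed i i.2
  rw [← hcont α hα hlim] at hle
  exact ⟨α, hα, le_antisymm hle
    (le_inf le_sup_left (le_iSup (fun i : {i : Ordinal.{0} // i < (aleph 1).ord} => A i) ⟨α, hα⟩))⟩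

/-- Under (H), in a `K`-ℵ₁-saturated structure, algebraic
independence has local character along increasing continuous ω₁-chains of
countable substructures. -/
theorem statement_16 (L : FirstOrder.Language.{0, 0}) (hL : Countable L.Symbols)
    (K : Set (Bundled.{0} L.Structure)) (hK : HypH L K)
    (M : Type) [L.Structure M] (hM : KSat L K M)
    (n : ℕ) (a : Fin n → M)
    (A : Ordinal.{0} → L.Substructure M)
    (hmono : ∀ i j : Ordinal.{0}, i ≤ j → j < (aleph 1).ord → A i ≤ A j)
    (hcnt : ∀ i : Ordinal.{0}, i < (aleph 1).ord → Countable (A i))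
    (hcont : ∀ l : Ordinal.{0}, l < (aleph 1).ord → Order.IsSuccLimit l →
      A l = ⨆ i : {i : Ordinal.{0} // i < l}, A i) :
    ∃ α < (aleph 1).ord,
      (A α ⊔ Substructure.closure L (Set.range a)) ⊓
          (⨆ i : {i : Ordinal.{0} // i < (aleph 1).ord}, A i) = A α :=
  statement_16_general L hL M n a A hmono hcnt hcont

end FraisseFreeAmalg
end
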